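/- arXiv:1810.01410 — 6 statements merged into one kernel-verified Lean document; each statement's English description precedes it below -/
import Mathlib

section
/- Suppose the quantity 2[α(p−1) − (p+1)]/(δ(p−1)²) is positive, set a = −2/(p−1), and let b_∞ > 0 be the positive real number with b_∞^{p−1} = 2[α(p−1) − (p+1)]/(δ(p−1)²). If there exists ε > 0 such that the function u_∞(x) = b_∞·x^a satisfies the perturbed Lane–Emden equation for all x ∈ (0, ε), then the coefficients satisfy a(a−1)·a_k + a·b_k + c_k = 0 for every k ∈ {−1, 0, …, n}. -/
set_option autoImplicit false

open Real Set

/-!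
With `A = -2/(p-1)` we have `A p = A - 2`, so substituting `u = B x^A` turns every term of the
equation into a multiple of `x^(A-2)`. The part without coefficients is
`(B (A(A-1) + αA) + δ B^p) x^(A-2)`, which vanishes by the choice of `B`; what remains is
`B x^A ∑ (A(A-1) a_k + A b_k + c_k) x^k`. A Laurent polynomial vanishing on an interval `(0, ε)`
has zero coefficients: multiplied by a power of `x` it becomes a polynomial with infinitely many
roots.
-/

theorem eq_zero_of_sum_mul_pow_eq_zero_on_Ioo {ι : Type*} {s : Finset ι} {e : ι → ℕ}
    (he : InjOn e s) {d : ι → ℝ} {ε : ℝ} (hε : 0 < ε)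
    (h : ∀ x ∈ Ioo 0 ε, ∑ i ∈ s, d i * x ^ e i = 0) : ∀ i ∈ s, d i = 0 := by
  open Polynomial in
  set P : ℝ[X] := ∑ i ∈ s, C (d i) * X ^ e i
  have hP : P = 0 := by
    refine P.eq_zero_of_infinite_isRoot ((Ioo_infinite hε).mono fun x hx => ?_)
    simpa [P, IsRoot, eval_finsetSum] using h x hx
  intro i hi
  have hcoeff : P.coeff (e i) = d i := by
    rw [finsetSum_coeff, Finset.sum_eq_single_of_mem i hi]
    · simp
    · intro j hj hji
      rw [coeff_C_mul_X_pow, if_neg fun hij => hji (he hj hi hij.symm)]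
  simpa [hP] using hcoeff.symm

theorem sum_mul_zpow_add (s : Finset ℤ) (f : ℤ → ℝ) {x : ℝ} (hx : x ≠ 0) (m : ℤ) :
    ∑ k ∈ s, f k * x ^ (k + m) = x ^ m * ∑ k ∈ s, f k * x ^ k := by
  rw [Finset.mul_sum]
  exact Finset.sum_congr rfl fun i _ => by rw [zpow_add₀ hx]; ring

theorem eq_zero_of_sum_mul_zpow_eq_zero_on_Ioo {s : Finset ℤ} {d : ℤ → ℝ} {ε : ℝ} (hε : 0 < ε)
    (h : ∀ x ∈ Ioo 0 ε, ∑ k ∈ s, d k * x ^ k = 0) : ∀ k ∈ s, d k = 0 := by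
  obtain ⟨m, hm⟩ : ∃ m : ℤ, ∀ k ∈ s, 0 ≤ k + m :=
    ⟨∑ k ∈ s, |k|, fun k hk => by
      linarith [neg_abs_le k, Finset.single_le_sum (fun j _ => abs_nonneg j) hk]⟩
  refine eq_zero_of_sum_mul_pow_eq_zero_on_Ioo (e := fun k => (k + m).toNat)
    (fun k hk l hl hkl => by have := hm k hk; have := hm l hl; simp only at hkl; omega) hε
    fun x hx => ?_
  calc ∑ k ∈ s, d k * x ^ (k + m).toNat = ∑ k ∈ s, d k * x ^ (k + m) :=
        Finset.sum_congr rfl fun k hk => by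
          rw [← zpow_natCast, Int.toNat_of_nonneg (hm k hk)]
    _ = 0 := by rw [sum_mul_zpow_add s d hx.1.ne' m]; simp [h x hx]

theorem deriv_const_mul_rpow (B r : ℝ) :
    deriv (fun x : ℝ => B * x ^ r) = fun x => B * r * x ^ (r - 1) := by
  ext x; simp [Real.deriv_rpow_const, mul_assoc]

theorem deriv_deriv_const_mul_rpow (B r : ℝ) :
    deriv (deriv fun x : ℝ => B * x ^ r) = fun x => B * r * (r - 1) * x ^ (r - 2) := by
  rw [deriv_const_mul_rpow, deriv_const_mul_rpow]; ext x; ring_nf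

theorem laneEmden_residual_const_mul_rpow {p : ℕ} {A : ℝ} (hA : A * p = A - 2)
    (B α δ : ℝ) (a b c : ℤ → ℝ) (s : Finset ℤ) {x : ℝ} (hx : 0 < x) :
    (1 + ∑ k ∈ s, a k * x ^ (k + 2)) * deriv (deriv fun y => B * y ^ A) x
        + (α / x + ∑ k ∈ s, b k * x ^ (k + 1)) * deriv (fun y => B * y ^ A) x
        + (∑ k ∈ s, c k * x ^ k) * (B * x ^ A) + δ * (B * x ^ A) ^ p
      = x ^ (A - 2) * (B * (A * (A - 1) + α * A) + δ * B ^ p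
          + B * x ^ 2 * ∑ k ∈ s, (A * (A - 1) * a k + A * b k + c k) * x ^ k) := by
  have h1 : x ^ (A - 1) = x ^ (A - 2) * x := by
    rw [← rpow_add_one hx.ne']; ring_nf
  have h0 : x ^ A = x ^ (A - 2) * x ^ 2 := by
    rw [← rpow_natCast, ← rpow_add hx]; ring_nf
  have hp : (x ^ A) ^ p = x ^ (A - 2) := by rw [← rpow_mul_natCast hx.le, hA]
  rw [deriv_deriv_const_mul_rpow, deriv_const_mul_rpow, sum_mul_zpow_add _ _ hx.ne',
    sum_mul_zpow_add _ _ hx.ne']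
  simp only [add_mul, Finset.sum_add_distrib, mul_assoc, ← Finset.mul_sum]
  rw [mul_pow, hp, h1, h0]
  field_simp
  ring

theorem perturbedLaneEmden_singular_solution_necessary_general
    (p : ℕ) (hp : 1 < p) (α δ : ℝ) (hδ : δ ≠ 0)
    (n : ℕ) (a b c : ℤ → ℝ)
    (binf : ℝ) (hbinf : 0 < binf)
    (hbinfp : binf ^ (p - 1)
      = 2 * (α * ((p : ℝ) - 1) - ((p : ℝ) + 1)) / (δ * ((p : ℝ) - 1) ^ 2))
    (u : ℝ → ℝ) (hu : u = fun x : ℝ => binf * x ^ (-2 / ((p : ℝ) - 1)))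
    (heq : ∃ ε > (0 : ℝ), ∀ x ∈ Ioo (0 : ℝ) ε,
      (1 + ∑ k ∈ Finset.Icc (-1 : ℤ) (n : ℤ), a k * x ^ (k + 2)) * deriv (deriv u) x
        + (α / x + ∑ k ∈ Finset.Icc (-1 : ℤ) (n : ℤ), b k * x ^ (k + 1)) * deriv u x
        + (∑ k ∈ Finset.Icc (-1 : ℤ) (n : ℤ), c k * x ^ k) * u x
        + δ * u x ^ p = 0) :
    ∀ k ∈ Finset.Icc (-1 : ℤ) (n : ℤ),
      (-2 / ((p : ℝ) - 1)) * (-2 / ((p : ℝ) - 1) - 1) * a k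
        + (-2 / ((p : ℝ) - 1)) * b k + c k = 0 := by
  obtain ⟨ε, hε, hsol⟩ := heq
  subst hu
  set A : ℝ := -2 / ((p : ℝ) - 1) with hA_def
  have hp1 : (p : ℝ) - 1 ≠ 0 := sub_ne_zero.2 (by exact_mod_cast hp.ne')
  have hA : A * p = A - 2 := by rw [hA_def]; field_simp; ring
  have hconst : binf * (A * (A - 1) + α * A) + δ * binf ^ p = 0 := by
    rw [← pow_sub_one_mul (by omega : p ≠ 0), hbinfp, hA_def]; field_simp; ring
  refine eq_zero_of_sum_mul_zpow_eq_zero_on_Ioo hε fun x hx => ?_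
  have hres := hsol x hx
  beta_reduce at hres
  rw [laneEmden_residual_const_mul_rpow hA binf α δ a b c _ hx.1, hconst, zero_add] at hres
  have hne : x ^ (A - 2) * (binf * x ^ 2) ≠ 0 := by have := hx.1; positivity
  exact (mul_eq_zero.1 (by linear_combination hres)).resolve_left hne

/-- If the singular function `u_∞(x) = b_∞ x^a`, `a = -2/(p-1)`, solves the
perturbed Lane–Emden equation on some interval `(0, ε)`, then the matching conditions
`a(a-1) a_k + a b_k + c_k = 0` hold for every `k ∈ {-1, ..., n}`. -/
theorem perturbedLaneEmden_singular_solution_necessary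
    (p : ℕ) (hp : 1 < p) (α δ : ℝ) (hα : 0 < α) (hδ : δ ≠ 0)
    (n : ℕ) (a b c : ℤ → ℝ)
    (hpos : 0 < 2 * (α * ((p : ℝ) - 1) - ((p : ℝ) + 1)) / (δ * ((p : ℝ) - 1) ^ 2))
    (binf : ℝ) (hbinf : 0 < binf)
    (hbinfp : binf ^ (p - 1)
      = 2 * (α * ((p : ℝ) - 1) - ((p : ℝ) + 1)) / (δ * ((p : ℝ) - 1) ^ 2))
    (u : ℝ → ℝ) (hu : u = fun x : ℝ => binf * x ^ (-2 / ((p : ℝ) - 1)))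
    (heq : ∃ ε > (0 : ℝ), ∀ x ∈ Ioo (0 : ℝ) ε,
      (1 + ∑ k ∈ Finset.Icc (-1 : ℤ) (n : ℤ), a k * x ^ (k + 2)) * deriv (deriv u) x
        + (α / x + ∑ k ∈ Finset.Icc (-1 : ℤ) (n : ℤ), b k * x ^ (k + 1)) * deriv u x
        + (∑ k ∈ Finset.Icc (-1 : ℤ) (n : ℤ), c k * x ^ k) * u x
        + δ * u x ^ p = 0) :
    ∀ k ∈ Finset.Icc (-1 : ℤ) (n : ℤ),
      (-2 / ((p : ℝ) - 1)) * (-2 / ((p : ℝ) - 1) - 1) * a k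
        + (-2 / ((p : ℝ) - 1)) * b k + c k = 0 :=
  perturbedLaneEmden_singular_solution_necessary_general p hp α δ hδ n a b c binf hbinf hbinfp u hu
    heq
end

section
/- If u₁ and u₂ are both real-analytic in a neighborhood of 0, each satisfies the perturbed Lane–Emden equation for all x ∈ (0, ε) for some ε > 0, and u₁(0) = u₂(0), then u₁ = u₂ on some neighborhood of 0 (the local analytic solution at x = 0 is uniquely determined by the initial value u(0) = c). -/
/-!
Multiplying the equation by `x` turns it into `A (x u'') + B u' + C u + δ x u^p = 0` with `A`, `B`,
`C` analytic at `0`, `A 0 = 1` and `B 0 = α`. The difference `w = u₁ - u₂` of two analytic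
solutions solves the linear equation obtained by replacing `C` with `C + δ x T`, where
`u₁^p - u₂^p = T w`. If `w` does not vanish near `0`, it has a finite order `m ≥ 1` there,
`w = x^m g` with `g 0 ≠ 0`; dividing the linear equation by `x^(m-1)` and letting `x → 0⁺`
leaves `m (m - 1 + α) g 0 = 0`, impossible since `α > 0`.
-/

set_option autoImplicit false

open Set Filter
open scoped Topology

/-- `x^(-k) · (x d/dx) · x^k`, applied to `g`. -/
noncomputable def eulerTwist (k : ℕ) (g : ℝ → ℝ) (x : ℝ) : ℝ :=
  k * g x + x * deriv g x

theorem AnalyticAt.eulerTwist {g : ℝ → ℝ} {x : ℝ} (hg : AnalyticAt ℝ g x) (k : ℕ) :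
    AnalyticAt ℝ (eulerTwist k g) x := by
  unfold _root_.eulerTwist
  fun_prop

theorem mul_deriv_pow_mul {g : ℝ → ℝ} {x : ℝ} (hg : DifferentiableAt ℝ g x) (k : ℕ) :
    x * deriv (fun y => y ^ k * g y) x = x ^ k * eulerTwist k g x := by
  rw [deriv_fun_mul (differentiableAt_pow k) hg, deriv_pow_field]
  cases k with
  | zero => simp [eulerTwist]
  | succ k => simp only [eulerTwist, Nat.add_sub_cancel]; push_cast; ring

theorem deriv_pow_succ_mul {g : ℝ → ℝ} {x : ℝ} (hg : DifferentiableAt ℝ g x) (k : ℕ) :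
    deriv (fun y => y ^ (k + 1) * g y) x = x ^ k * eulerTwist (k + 1) g x := by
  rw [deriv_fun_mul (differentiableAt_pow _) hg, deriv_pow_field]
  simp only [eulerTwist, Nat.add_sub_cancel]
  push_cast
  ring

theorem derivs_eventuallyEq_of_eventuallyEq_pow_succ_mul {w g : ℝ → ℝ} (hg : AnalyticAt ℝ g 0)
    (k : ℕ) (hwg : w =ᶠ[𝓝 0] fun x => x ^ (k + 1) * g x) :
    deriv w =ᶠ[𝓝 0] (fun x => x ^ k * eulerTwist (k + 1) g x) ∧
      (fun x => x * deriv (deriv w) x) =ᶠ[𝓝 0]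
        fun x => x ^ k * eulerTwist k (eulerTwist (k + 1) g) x := by
  have h₁ : deriv w =ᶠ[𝓝 0] (fun x => x ^ k * eulerTwist (k + 1) g x) := by
    refine hwg.deriv.trans ?_
    filter_upwards [hg.eventually_analyticAt] with x hx
    exact deriv_pow_succ_mul hx.differentiableAt k
  refine ⟨h₁, ?_⟩
  filter_upwards [h₁.deriv, (hg.eulerTwist (k + 1)).eventually_analyticAt] with x hx hx'
  rw [hx]
  exact mul_deriv_pow_mul hx'.differentiableAt k

theorem ContinuousAt.eq_zero_of_eventually_pow_mul_eq_zero {H : ℝ → ℝ} (hH : ContinuousAt H 0)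
    (k : ℕ) (h : ∀ᶠ x in 𝓝[>] 0, x ^ k * H x = 0) : H 0 = 0 := by
  have hH₀ : ∀ᶠ x in 𝓝[>] 0, H x = 0 := by
    filter_upwards [h, self_mem_nhdsWithin] with x hx hx₀
    exact (mul_eq_zero.mp hx).resolve_left (pow_ne_zero k (ne_of_gt hx₀))
  exact tendsto_nhds_unique (hH.tendsto.mono_left nhdsWithin_le_nhds)
    (tendsto_const_nhds.congr' (hH₀.mono fun x hx => hx.symm))

/-- `(k + 1) (k A 0 + B 0)` is the indicial polynomial of `A (x w'') + B w' + C w = 0` at the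
exponent `k + 1`. -/
theorem eventuallyEq_zero_of_indicial_ne_zero {A B C w : ℝ → ℝ} (hA : AnalyticAt ℝ A 0)
    (hB : AnalyticAt ℝ B 0) (hC : AnalyticAt ℝ C 0) (hw : AnalyticAt ℝ w 0)
    (hind : ∀ k : ℕ, (k : ℝ) * A 0 + B 0 ≠ 0) (hw₀ : w 0 = 0)
    (hode : ∀ᶠ x in 𝓝[>] 0, A x * (x * deriv (deriv w) x) + B x * deriv w x + C x * w x = 0) :
    w =ᶠ[𝓝 0] 0 := by
  by_contra hne
  obtain ⟨g, hg, hg₀, hwg⟩ := hw.analyticOrderAt_ne_top.mp (mt analyticOrderAt_eq_top.mp hne)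
  obtain ⟨k, hk⟩ : ∃ k, analyticOrderNatAt w 0 = k + 1 :=
    Nat.exists_eq_succ_of_ne_zero fun h => hg₀ (by simpa [h, hw₀] using hwg.self_of_nhds.symm)
  simp only [hk, sub_zero, smul_eq_mul] at hwg
  obtain ⟨hd₁, hd₂⟩ := derivs_eventuallyEq_of_eventuallyEq_pow_succ_mul hg k hwg
  set g₁ := eulerTwist (k + 1) g
  set g₂ := eulerTwist k g₁
  have hH : ContinuousAt (fun x => A x * g₂ x + B x * g₁ x + C x * (x * g x)) 0 :=
    (((hA.mul ((hg.eulerTwist _).eulerTwist _)).add (hB.mul (hg.eulerTwist _))).add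
      (hC.mul (analyticAt_id.mul hg))).continuousAt
  have hH₀ := hH.eq_zero_of_eventually_pow_mul_eq_zero k <| by
    filter_upwards [hode, nhdsWithin_le_nhds hd₁, nhdsWithin_le_nhds hd₂,
      nhdsWithin_le_nhds hwg] with x hx hd₁x hd₂x hwx
    linear_combination hx - A x * hd₂x - B x * hd₁x - C x * hwx
  have hleading : ((k : ℝ) + 1) * (k * A 0 + B 0) * g 0 ≠ 0 :=
    mul_ne_zero (mul_ne_zero (by positivity) (hind k)) hg₀
  refine hleading (Eq.trans ?_ hH₀)
  simp only [g₂, g₁, eulerTwist]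
  push_cast
  ring

theorem AnalyticAt.deriv_sub_eventuallyEq {f g : ℝ → ℝ} {x : ℝ} (hf : AnalyticAt ℝ f x)
    (hg : AnalyticAt ℝ g x) : deriv (f - g) =ᶠ[𝓝 x] deriv f - deriv g := by
  filter_upwards [hf.eventually_analyticAt, hg.eventually_analyticAt] with y hfy hgy
  exact deriv_sub hfy.differentiableAt hgy.differentiableAt

theorem eventuallyEq_of_semilinear_indicial_ne_zero {A B C u₁ u₂ : ℝ → ℝ} {δ : ℝ} {p : ℕ}
    (hA : AnalyticAt ℝ A 0) (hB : AnalyticAt ℝ B 0) (hC : AnalyticAt ℝ C 0)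
    (h₁ : AnalyticAt ℝ u₁ 0) (h₂ : AnalyticAt ℝ u₂ 0)
    (hind : ∀ k : ℕ, (k : ℝ) * A 0 + B 0 ≠ 0) (h₀ : u₁ 0 = u₂ 0)
    (e₁ : ∀ᶠ x in 𝓝[>] 0,
      A x * (x * deriv (deriv u₁) x) + B x * deriv u₁ x + C x * u₁ x + δ * x * u₁ x ^ p = 0)
    (e₂ : ∀ᶠ x in 𝓝[>] 0,
      A x * (x * deriv (deriv u₂) x) + B x * deriv u₂ x + C x * u₂ x + δ * x * u₂ x ^ p = 0) :
    u₁ =ᶠ[𝓝 0] u₂ := by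
  have hd₁ := h₁.deriv_sub_eventuallyEq h₂
  have hd₂ : deriv (deriv (u₁ - u₂)) =ᶠ[𝓝 0] deriv (deriv u₁) - deriv (deriv u₂) :=
    hd₁.deriv.trans (h₁.deriv.deriv_sub_eventuallyEq h₂.deriv)
  have hw : u₁ - u₂ =ᶠ[𝓝 0] 0 := by
    refine eventuallyEq_zero_of_indicial_ne_zero
      (C := fun x => C x + δ * x * ∑ i ∈ Finset.range p, u₁ x ^ i * u₂ x ^ (p - 1 - i))
      hA hB (by fun_prop) (h₁.sub h₂) hind (by simp [h₀]) ?_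
    filter_upwards [e₁, e₂, nhdsWithin_le_nhds hd₁, nhdsWithin_le_nhds hd₂]
      with x he₁ he₂ hd₁x hd₂x
    simp only [Pi.sub_apply] at hd₁x hd₂x ⊢
    rw [hd₁x, hd₂x]
    linear_combination he₁ - he₂ + δ * x * geom_sum₂_mul (u₁ x) (u₂ x) p
  exact hw.mono fun x hx => sub_eq_zero.mp hx

theorem analyticAt_sum_mul_zpow {S : Finset ℤ} {e : ℤ → ℤ} (he : ∀ k ∈ S, 0 ≤ e k) (f : ℤ → ℝ)
    (x : ℝ) : AnalyticAt ℝ (fun y => ∑ k ∈ S, f k * y ^ e k) x :=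
  Finset.analyticAt_fun_sum _ fun k hk => analyticAt_const.mul (analyticAt_id.zpow_nonneg (he k hk))

theorem sum_mul_zero_zpow {S : Finset ℤ} {e : ℤ → ℤ} (he : ∀ k ∈ S, e k ≠ 0) (f : ℤ → ℝ) :
    ∑ k ∈ S, f k * (0 : ℝ) ^ e k = 0 :=
  Finset.sum_eq_zero fun k hk => by rw [zero_zpow _ (he k hk), mul_zero]

theorem mul_sum_mul_zpow_add_one {S : Finset ℤ} {x : ℝ} (hx : x ≠ 0) (f : ℤ → ℝ) (j : ℤ) :
    x * ∑ k ∈ S, f k * x ^ (k + j) = ∑ k ∈ S, f k * x ^ (k + (j + 1)) := by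
  rw [Finset.mul_sum]
  refine Finset.sum_congr rfl fun k _ => ?_
  rw [← add_assoc, zpow_add_one₀ hx]
  ring

theorem eventually_nhdsGT_mul_laneEmden {n p : ℕ} {α δ ε : ℝ} {a b c : ℤ → ℝ} {u : ℝ → ℝ}
    (hε : 0 < ε)
    (h : ∀ x ∈ Ioo (0 : ℝ) ε,
      (1 + ∑ k ∈ Finset.Icc (-1 : ℤ) (n : ℤ), a k * x ^ (k + 2)) * deriv (deriv u) x
        + (α / x + ∑ k ∈ Finset.Icc (-1 : ℤ) (n : ℤ), b k * x ^ (k + 1)) * deriv u x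
        + (∑ k ∈ Finset.Icc (-1 : ℤ) (n : ℤ), c k * x ^ k) * u x
        + δ * u x ^ p = 0) :
    ∀ᶠ x in 𝓝[>] 0,
      (1 + ∑ k ∈ Finset.Icc (-1 : ℤ) (n : ℤ), a k * x ^ (k + 2)) * (x * deriv (deriv u) x)
        + (α + ∑ k ∈ Finset.Icc (-1 : ℤ) (n : ℤ), b k * x ^ (k + 2)) * deriv u x
        + (∑ k ∈ Finset.Icc (-1 : ℤ) (n : ℤ), c k * x ^ (k + 1)) * u x
        + δ * x * u x ^ p = 0 := by
  filter_upwards [Ioo_mem_nhdsGT hε] with x hx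
  have hx₀ : x ≠ 0 := hx.1.ne'
  have hQ := mul_sum_mul_zpow_add_one (S := Finset.Icc (-1 : ℤ) n) hx₀ b 1
  have hR := mul_sum_mul_zpow_add_one (S := Finset.Icc (-1 : ℤ) n) hx₀ c 0
  rw [one_add_one_eq_two] at hQ
  simp only [add_zero, zero_add] at hR
  rw [← hQ, ← hR]
  linear_combination x * h x hx - deriv u x * mul_div_cancel₀ α hx₀

theorem perturbedLaneEmden_local_analytic_solution_unique_general
    (p : ℕ) (α δ : ℝ) (hα : 0 < α)
    (n : ℕ) (a b c : ℤ → ℝ)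
    (u₁ u₂ : ℝ → ℝ)
    (h₁ : AnalyticAt ℝ u₁ 0) (h₂ : AnalyticAt ℝ u₂ 0)
    (heq₁ : ∃ ε > (0 : ℝ), ∀ x ∈ Ioo (0 : ℝ) ε,
      (1 + ∑ k ∈ Finset.Icc (-1 : ℤ) (n : ℤ), a k * x ^ (k + 2)) * deriv (deriv u₁) x
        + (α / x + ∑ k ∈ Finset.Icc (-1 : ℤ) (n : ℤ), b k * x ^ (k + 1)) * deriv u₁ x
        + (∑ k ∈ Finset.Icc (-1 : ℤ) (n : ℤ), c k * x ^ k) * u₁ x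
        + δ * u₁ x ^ p = 0)
    (heq₂ : ∃ ε > (0 : ℝ), ∀ x ∈ Ioo (0 : ℝ) ε,
      (1 + ∑ k ∈ Finset.Icc (-1 : ℤ) (n : ℤ), a k * x ^ (k + 2)) * deriv (deriv u₂) x
        + (α / x + ∑ k ∈ Finset.Icc (-1 : ℤ) (n : ℤ), b k * x ^ (k + 1)) * deriv u₂ x
        + (∑ k ∈ Finset.Icc (-1 : ℤ) (n : ℤ), c k * x ^ k) * u₂ x
        + δ * u₂ x ^ p = 0)
    (h0 : u₁ 0 = u₂ 0) :
    u₁ =ᶠ[nhds (0 : ℝ)] u₂ := by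
  obtain ⟨ε₁, hε₁, e₁⟩ := heq₁
  obtain ⟨ε₂, hε₂, e₂⟩ := heq₂
  have hk₁ : ∀ k ∈ Finset.Icc (-1 : ℤ) n, 0 ≤ k + 1 := fun k hk => by
    linarith [(Finset.mem_Icc.mp hk).1]
  have hk₂ : ∀ k ∈ Finset.Icc (-1 : ℤ) n, 0 < k + 2 := fun k hk => by linarith [hk₁ k hk]
  refine eventuallyEq_of_semilinear_indicial_ne_zero ?_ ?_ (analyticAt_sum_mul_zpow hk₁ c 0)
    h₁ h₂ ?_ h0 (eventually_nhdsGT_mul_laneEmden hε₁ e₁) (eventually_nhdsGT_mul_laneEmden hε₂ e₂)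
  · exact analyticAt_const.add (analyticAt_sum_mul_zpow (fun k hk => (hk₂ k hk).le) a 0)
  · exact analyticAt_const.add (analyticAt_sum_mul_zpow (fun k hk => (hk₂ k hk).le) b 0)
  · intro k
    rw [sum_mul_zero_zpow (fun k hk => (hk₂ k hk).ne') a,
      sum_mul_zero_zpow (fun k hk => (hk₂ k hk).ne') b]
    positivity

/-- Two functions that are real-analytic near `0`, satisfy the perturbed
Lane–Emden equation on some right-neighbourhood `(0, ε)` of `0`, and share the initial
value at `0`, coincide in a neighbourhood of `0`. -/
theorem perturbedLaneEmden_local_analytic_solution_unique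
    (p : ℕ) (hp : 1 < p) (α δ : ℝ) (hα : 0 < α) (hδ : δ ≠ 0)
    (n : ℕ) (a b c : ℤ → ℝ)
    (u₁ u₂ : ℝ → ℝ)
    (h₁ : AnalyticAt ℝ u₁ 0) (h₂ : AnalyticAt ℝ u₂ 0)
    (heq₁ : ∃ ε > (0 : ℝ), ∀ x ∈ Ioo (0 : ℝ) ε,
      (1 + ∑ k ∈ Finset.Icc (-1 : ℤ) (n : ℤ), a k * x ^ (k + 2)) * deriv (deriv u₁) x
        + (α / x + ∑ k ∈ Finset.Icc (-1 : ℤ) (n : ℤ), b k * x ^ (k + 1)) * deriv u₁ x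
        + (∑ k ∈ Finset.Icc (-1 : ℤ) (n : ℤ), c k * x ^ k) * u₁ x
        + δ * u₁ x ^ p = 0)
    (heq₂ : ∃ ε > (0 : ℝ), ∀ x ∈ Ioo (0 : ℝ) ε,
      (1 + ∑ k ∈ Finset.Icc (-1 : ℤ) (n : ℤ), a k * x ^ (k + 2)) * deriv (deriv u₂) x
        + (α / x + ∑ k ∈ Finset.Icc (-1 : ℤ) (n : ℤ), b k * x ^ (k + 1)) * deriv u₂ x
        + (∑ k ∈ Finset.Icc (-1 : ℤ) (n : ℤ), c k * x ^ k) * u₂ x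
        + δ * u₂ x ^ p = 0)
    (h0 : u₁ 0 = u₂ 0) :
    u₁ =ᶠ[nhds (0 : ℝ)] u₂ :=
  perturbedLaneEmden_local_analytic_solution_unique_general p α δ hα n a b c u₁ u₂ h₁ h₂ heq₁ heq₂
    h0
end

section
/- For every c ∈ ℝ there exist ε > 0 and a function u that is real-analytic on (−ε, ε), with u(0) = c and u'(0) = 0, which satisfies the example equation for all x ∈ (0, ε); moreover its Taylor coefficients a_k = u^{(k)}(0)/k! satisfy a_0 = c, a_1 = 0 and, for all k ≥ 0, a_{k+2} = [(k(k−1−β) + γ)·a_k − δ·c_k] / ((k+2)(k+1+α)), where c_k denotes the k-th Taylor coefficient of the function u^p at 0. -/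
/-!
Substituting `u = ∑ aₖ xᵏ` into the equation and comparing coefficients of `xᵏ` gives
`(k+2)(k+1+α) a_{k+2} = (k(k-1-β)+γ) aₖ - δ cₖ`, where `cₖ` is the `k`-th coefficient of `uᵖ`;
since `cₖ` only involves `a₀, …, aₖ`, this determines the `aₖ` from `a₀ = c`, `a₁ = 0`.
The series converges: by induction `|aₖ| ≤ M Rᵏ / (k+1)²`, because the weight `1/(k+1)²` is
stable under Cauchy products up to a factor `8`, so `|cₖ| ≤ (8M)ᵖ Rᵏ / (k+1)²`, and the
divisor `(k+2)(k+1+α) ≥ (k+1)²` absorbs the quadratic growth of `k(k-1-β)+γ`. On `|x| < 1/R`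
the sum `u` is analytic, its derivatives are summed termwise, and its Taylor coefficients are
the `aₖ`, so the coefficient identities are exactly the equation and the recurrence.
-/

set_option autoImplicit false

open Real Set

open Finset FormalMultilinearSeries PowerSeries

noncomputable def invSqSucc (k : ℕ) : ℝ := 1 / ((k : ℝ) + 1) ^ 2

theorem invSqSucc_pos (k : ℕ) : 0 < invSqSucc k := by
  unfold invSqSucc; positivity

theorem invSqSucc_le_one (k : ℕ) : invSqSucc k ≤ 1 := by
  unfold invSqSucc
  rw [div_le_one (by positivity)]
  nlinarith [k.cast_nonneg (α := ℝ)]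

theorem invSqSucc_le_nine_mul_add_two (k : ℕ) : invSqSucc k ≤ 9 * invSqSucc (k + 2) := by
  unfold invSqSucc
  rw [mul_one_div, div_le_div_iff₀ (by positivity) (by positivity)]
  push_cast
  nlinarith [k.cast_nonneg (α := ℝ)]

theorem sum_range_invSqSucc_le_two (k : ℕ) : ∑ i ∈ Finset.range k, invSqSucc i ≤ 2 := by
  have h := sum_Ioo_inv_sq_le (α := ℝ) 0 (k + 1)
  rw [← Finset.Ico_add_one_left_eq_Ioo, Finset.sum_Ico_eq_sum_range] at h
  simpa [invSqSucc, add_comm] using h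

theorem invSqSucc_mul_le {i j k : ℕ} (hijk : i + j = k) :
    invSqSucc i * invSqSucc j ≤ 2 * invSqSucc k * (invSqSucc i + invSqSucc j) := by
  have hk : (k : ℝ) + 1 ≤ ((i : ℝ) + 1) + ((j : ℝ) + 1) := by
    rw [← hijk]; push_cast; linarith
  unfold invSqSucc
  field_simp
  nlinarith [sq_nonneg ((i : ℝ) - j), i.cast_nonneg (α := ℝ), j.cast_nonneg (α := ℝ)]

theorem sum_antidiagonal_invSqSucc_le (k : ℕ) :
    ∑ ij ∈ antidiagonal k, invSqSucc ij.1 * invSqSucc ij.2 ≤ 8 * invSqSucc k := by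
  have hsum : ∑ ij ∈ antidiagonal k, (invSqSucc ij.1 + invSqSucc ij.2) ≤ 4 := by
    have hswap : ∑ ij ∈ antidiagonal k, invSqSucc ij.2 = ∑ ij ∈ antidiagonal k, invSqSucc ij.1 :=
      Nat.sum_antidiagonal_swap (f := fun ij => invSqSucc ij.1)
    rw [sum_add_distrib, hswap, Nat.sum_antidiagonal_eq_sum_range_succ_mk]
    linarith [sum_range_invSqSucc_le_two (k + 1)]
  calc ∑ ij ∈ antidiagonal k, invSqSucc ij.1 * invSqSucc ij.2
      ≤ ∑ ij ∈ antidiagonal k, 2 * invSqSucc k * (invSqSucc ij.1 + invSqSucc ij.2) :=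
        sum_le_sum fun ij hij => invSqSucc_mul_le (mem_antidiagonal.mp hij)
    _ ≤ 2 * invSqSucc k * 4 := by
        rw [← mul_sum]; gcongr; linarith [invSqSucc_pos k]
    _ = 8 * invSqSucc k := by ring

section Majorant

variable {f g : PowerSeries ℝ} {M N R : ℝ} {k : ℕ}

theorem abs_coeff_mul_le (hR : 0 ≤ R) (hf : ∀ j ≤ k, |coeff j f| ≤ M * R ^ j * invSqSucc j)
    (hg : ∀ j ≤ k, |coeff j g| ≤ N * R ^ j * invSqSucc j) :
    |coeff k (f * g)| ≤ 8 * M * N * R ^ k * invSqSucc k := by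
  have hM : 0 ≤ M := by simpa [invSqSucc] using (abs_nonneg _).trans (hf 0 k.zero_le)
  have hN : 0 ≤ N := by simpa [invSqSucc] using (abs_nonneg _).trans (hg 0 k.zero_le)
  rw [coeff_mul]
  calc |∑ ij ∈ antidiagonal k, coeff ij.1 f * coeff ij.2 g|
      ≤ ∑ ij ∈ antidiagonal k,
          (M * R ^ ij.1 * invSqSucc ij.1) * (N * R ^ ij.2 * invSqSucc ij.2) := by
        refine (abs_sum_le_sum_abs _ _).trans (sum_le_sum fun ij hij => ?_)
        have hi : ij.1 ≤ k := by have := mem_antidiagonal.mp hij; omega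
        have hj : ij.2 ≤ k := by have := mem_antidiagonal.mp hij; omega
        rw [abs_mul]
        exact mul_le_mul (hf _ hi) (hg _ hj) (abs_nonneg _) ((abs_nonneg _).trans (hf _ hi))
    _ = M * N * R ^ k * ∑ ij ∈ antidiagonal k, invSqSucc ij.1 * invSqSucc ij.2 := by
        rw [mul_sum]
        refine sum_congr rfl fun ij hij => ?_
        rw [← mem_antidiagonal.mp hij, pow_add]
        ring
    _ ≤ M * N * R ^ k * (8 * invSqSucc k) := by
        gcongr; exact sum_antidiagonal_invSqSucc_le k
    _ = 8 * M * N * R ^ k * invSqSucc k := by ring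

theorem abs_coeff_pow_le (hR : 0 ≤ R) (hf : ∀ j ≤ k, |coeff j f| ≤ M * R ^ j * invSqSucc j)
    (p : ℕ) : |coeff k (f ^ p)| ≤ (8 * M) ^ p * R ^ k * invSqSucc k := by
  suffices h : ∀ j ≤ k, |coeff j (f ^ p)| ≤ (8 * M) ^ p * R ^ j * invSqSucc j from h k le_rfl
  induction p with
  | zero =>
    intro j _
    rcases j with _ | j
    · simp [invSqSucc]
    · simpa [coeff_one] using mul_nonneg (pow_nonneg hR _) (invSqSucc_pos _).le
  | succ p ih =>
    intro j hj
    rw [pow_succ]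
    calc |coeff j (f ^ p * f)| ≤ 8 * (8 * M) ^ p * M * R ^ j * invSqSucc j :=
          abs_coeff_mul_le hR (fun i hi => ih i (hi.trans hj)) (fun i hi => hf i (hi.trans hj))
      _ = (8 * M) ^ (p + 1) * R ^ j * invSqSucc j := by ring

end Majorant

theorem PowerSeries.coeff_pow_eq_of_trunc_eq {S : Type*} [CommSemiring S] {f g : PowerSeries S}
    {k : ℕ} (h : trunc (k + 1) f = trunc (k + 1) g) (p : ℕ) :
    coeff k (f ^ p) = coeff k (g ^ p) := by
  rw [← coeff_coe_trunc_of_lt k.lt_succ_self, ← trunc_trunc_pow, h, trunc_trunc_pow,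
    coeff_coe_trunc_of_lt k.lt_succ_self]

section Analytic

variable {𝕜 : Type*} [NontriviallyNormedField 𝕜]

theorem HasFPowerSeriesOnBall.deriv_ofScalars [CompleteSpace 𝕜] {f : 𝕜 → 𝕜} {a : ℕ → 𝕜}
    {r : ENNReal} (h : HasFPowerSeriesOnBall f (ofScalars 𝕜 a) 0 r) :
    HasFPowerSeriesOnBall (deriv f) (ofScalars 𝕜 fun n => (n + 1) * a (n + 1)) 0 r := by
  convert (ContinuousLinearMap.apply 𝕜 𝕜 (1 : 𝕜)).comp_hasFPowerSeriesOnBall h.fderiv using 1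
  · ext x
    simp
  · refine FormalMultilinearSeries.ext fun n => ?_
    rw [← mkPiRing_coeff_eq (ofScalars 𝕜 _), ← mkPiRing_coeff_eq
      ((ContinuousLinearMap.apply 𝕜 𝕜 (1 : 𝕜)).compFormalMultilinearSeries _)]
    congr 1
    change _ = (ofScalars 𝕜 a).derivSeries.coeff n 1
    rw [derivSeries_coeff_one, coeff_ofScalars, coeff_ofScalars, nsmul_eq_mul]
    push_cast
    ring

theorem HasFPowerSeriesAt.iteratedDeriv_div_factorial [CompleteSpace 𝕜] [CharZero 𝕜]
    {f : 𝕜 → 𝕜} {a : ℕ → 𝕜} {x : 𝕜} (h : HasFPowerSeriesAt f (ofScalars 𝕜 a) x) (n : ℕ) :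
    iteratedDeriv n f x / n.factorial = a n :=
  congrFun ((ofScalars_series_eq_iff 𝕜 _ _).mp
    (h.analyticAt.hasFPowerSeriesAt.eq_formalMultilinearSeries h)) n

theorem le_radius_ofScalars_of_norm_le {a : ℕ → 𝕜} {M R : ℝ} (hR : 0 < R)
    (h : ∀ n, ‖a n‖ ≤ M * R ^ n) : ENNReal.ofReal R⁻¹ ≤ (ofScalars 𝕜 a).radius := by
  refine le_radius_of_bound _ M fun n => ?_
  rw [ofScalars_norm, Real.coe_toNNReal _ (by positivity), inv_pow]
  calc ‖a n‖ * (R ^ n)⁻¹ ≤ M * R ^ n * (R ^ n)⁻¹ := by gcongr; exact h n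
    _ = M := by field_simp

theorem ofScalars_apply_eq_mul (a : ℕ → 𝕜) (n : ℕ) (y : 𝕜) :
    ofScalars 𝕜 a n (fun _ => y) = a n * y ^ n := by
  rw [ofScalars_apply_eq, smul_eq_mul]

theorem HasFPowerSeriesOnBall.hasSum_ofScalars {f : 𝕜 → 𝕜} {a : ℕ → 𝕜} {r : ENNReal}
    (h : HasFPowerSeriesOnBall f (ofScalars 𝕜 a) 0 r) {x : 𝕜} (hx : x ∈ Metric.eball (0 : 𝕜) r) :
    HasSum (fun n => a n * x ^ n) (f x) := by
  simpa only [ofScalars_apply_eq_mul, zero_add] using h.hasSum hx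

theorem coeff_mul_mul_pow (φ ψ : PowerSeries 𝕜) (n : ℕ) (y : 𝕜) :
    coeff n (φ * ψ) * y ^ n
      = ∑ ij ∈ antidiagonal n, (coeff ij.1 φ * y ^ ij.1) * (coeff ij.2 ψ * y ^ ij.2) := by
  rw [coeff_mul, sum_mul]
  refine sum_congr rfl fun ij hij => ?_
  rw [← mem_antidiagonal.mp hij, pow_add]
  ring

theorem HasFPowerSeriesOnBall.mul_ofScalars [CompleteSpace 𝕜] {f g : 𝕜 → 𝕜} {φ ψ : PowerSeries 𝕜}
    {r : ENNReal} (hf : HasFPowerSeriesOnBall f (ofScalars 𝕜 (coeff · φ)) 0 r)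
    (hg : HasFPowerSeriesOnBall g (ofScalars 𝕜 (coeff · ψ)) 0 r) :
    HasFPowerSeriesOnBall (fun x => f x * g x) (ofScalars 𝕜 (coeff · (φ * ψ))) 0 r := by
  refine ⟨ENNReal.le_of_forall_nnreal_lt fun t ht => ?_, hf.r_pos, fun {y} hy => ?_⟩
  · have hφ : Summable fun n => ‖coeff n φ‖ * (t : ℝ) ^ n := by
      simpa only [ofScalars_norm] using summable_norm_mul_pow _ (ht.trans_le hf.r_le)
    have hψ : Summable fun n => ‖coeff n ψ‖ * (t : ℝ) ^ n := by
      simpa only [ofScalars_norm] using summable_norm_mul_pow _ (ht.trans_le hg.r_le)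
    have hφψ : Summable fun n => ∑ ij ∈ antidiagonal n,
        (‖coeff ij.1 φ‖ * (t : ℝ) ^ ij.1) * (‖coeff ij.2 ψ‖ * (t : ℝ) ^ ij.2) :=
      summable_sum_mul_antidiagonal_of_summable_mul (f := fun n => ‖coeff n φ‖ * (t : ℝ) ^ n)
        (g := fun n => ‖coeff n ψ‖ * (t : ℝ) ^ n)
        (hφ.mul_of_nonneg hψ (fun n => by dsimp only [Pi.zero_apply]; positivity)
          (fun n => by dsimp only [Pi.zero_apply]; positivity))
    refine le_radius_of_summable_norm _ ?_
    simp only [ofScalars_norm]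
    refine hφψ.of_nonneg_of_le (fun _ => by positivity) (fun n => ?_)
    calc ‖coeff n (φ * ψ)‖ * (t : ℝ) ^ n
        ≤ (∑ ij ∈ antidiagonal n, ‖coeff ij.1 φ‖ * ‖coeff ij.2 ψ‖) * (t : ℝ) ^ n := by
          rw [coeff_mul]
          gcongr
          exact (norm_sum_le _ _).trans (sum_le_sum fun ij _ => norm_mul_le _ _)
      _ = _ := by
        rw [sum_mul]
        refine sum_congr rfl fun ij hij => ?_
        rw [← mem_antidiagonal.mp hij, pow_add]
        ring
  · have hyφ := (ofScalars 𝕜 (coeff · φ)).summable_norm_apply (Metric.eball_subset_eball hf.r_le hy)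
    have hyψ := (ofScalars 𝕜 (coeff · ψ)).summable_norm_apply (Metric.eball_subset_eball hg.r_le hy)
    simp only [ofScalars_apply_eq_mul, zero_add, coeff_mul_mul_pow] at hyφ hyψ ⊢
    rw [← (hf.hasSum_ofScalars hy).tsum_eq, ← (hg.hasSum_ofScalars hy).tsum_eq,
      tsum_mul_tsum_eq_tsum_sum_antidiagonal_of_summable_norm hyφ hyψ]
    exact (summable_norm_sum_mul_antidiagonal_of_summable_norm hyφ hyψ).of_norm.hasSum

theorem HasFPowerSeriesOnBall.pow_ofScalars [CompleteSpace 𝕜] {f : 𝕜 → 𝕜} {φ : PowerSeries 𝕜}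
    {r : ENNReal} (hf : HasFPowerSeriesOnBall f (ofScalars 𝕜 (coeff · φ)) 0 r) (p : ℕ) :
    HasFPowerSeriesOnBall (fun x => f x ^ p) (ofScalars 𝕜 (coeff · (φ ^ p))) 0 r := by
  induction p with
  | zero =>
    have hone : ofScalars 𝕜 (coeff · (1 : PowerSeries 𝕜)) = constFormalMultilinearSeries 𝕜 𝕜 1 := by
      refine FormalMultilinearSeries.ext fun n => ?_
      cases n <;> ext <;> simp [coeff_one]
    simp only [pow_zero]
    rw [hone]
    exact (hasFPowerSeriesOnBall_const (𝕜 := 𝕜) (c := (1 : 𝕜)) (e := (0 : 𝕜))).mono hf.r_pos le_top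
  | succ p ih => simpa only [pow_succ] using ih.mul_ofScalars hf

theorem hasSum_mul_pow_iff_of_eq_nat_add {b b' : ℕ → 𝕜} {x s : 𝕜} (k : ℕ) (hx : x ≠ 0)
    (hb : ∀ i < k, b i = 0) (hb' : ∀ n, b' n = b (n + k)) :
    HasSum (fun n => b' n * x ^ n) s ↔ HasSum (fun n => b n * x ^ n) (x ^ k * s) := by
  have hshift : (fun n => x ^ k * (b' n * x ^ n)) = fun n => b (n + k) * x ^ (n + k) :=
    funext fun n => by rw [hb', pow_add]; ring
  rw [← hasSum_mul_left_iff (pow_ne_zero k hx), hshift]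
  refine Iff.trans ?_ (hasSum_nat_add_iff' k)
  rw [sum_eq_zero fun i hi => by rw [hb i (mem_range.mp hi), zero_mul], sub_zero]

end Analytic

namespace ExampleEquation

theorem exampleEquation_of_hasFPowerSeriesOnBall {u g : ℝ → ℝ} {a c : ℕ → ℝ} {r : ENNReal}
    {α β γ δ : ℝ} (hu : HasFPowerSeriesOnBall u (ofScalars ℝ a) 0 r)
    (hg : HasFPowerSeriesOnBall g (ofScalars ℝ c) 0 r) (ha₁ : a 1 = 0)
    (hrec : ∀ k : ℕ, ((k : ℝ) + 2) * ((k : ℝ) + 1 + α) * a (k + 2)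
      = ((k : ℝ) * ((k : ℝ) - 1 - β) + γ) * a k - δ * c k)
    {x : ℝ} (hx : x ∈ Metric.eball (0 : ℝ) r) (hx₀ : x ≠ 0) :
    (1 - x ^ 2) * deriv (deriv u) x + (α / x + β * x) * deriv u x - γ * u x + δ * g x = 0 := by
  have hu₀ : HasSum (fun n => a n * x ^ n) (u x) := hu.hasSum_ofScalars hx
  have hg₀ : HasSum (fun n => c n * x ^ n) (g x) := hg.hasSum_ofScalars hx
  have hu₁ : HasSum (fun n : ℕ => ((n : ℝ) + 1) * a (n + 1) * x ^ n) (deriv u x) :=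
    hu.deriv_ofScalars.hasSum_ofScalars hx
  have hu₂ : HasSum (fun n : ℕ => ((n : ℝ) + 2) * ((n : ℝ) + 1) * a (n + 2) * x ^ n)
      (deriv (deriv u) x) := by
    have e : ∀ n : ℕ, ((n : ℝ) + 2) * ((n : ℝ) + 1) * a (n + 2)
        = ((n : ℝ) + 1) * ((((n + 1 : ℕ) : ℝ) + 1) * a (n + 1 + 1)) := fun n => by push_cast; ring
    simpa only [e] using hu.deriv_ofScalars.deriv_ofScalars.hasSum_ofScalars hx
  -- `a₁ = 0` is what makes `u' / x` a power series.
  have hu₁_div : HasSum (fun n : ℕ => ((n : ℝ) + 2) * a (n + 2) * x ^ n) (deriv u x / x) := by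
    refine (hasSum_mul_pow_iff_of_eq_nat_add (b := fun n : ℕ => ((n : ℝ) + 1) * a (n + 1)) 1 hx₀
      (by simp [ha₁]) (fun n => by push_cast; ring)).mpr ?_
    simpa only [pow_one, mul_div_cancel₀ _ hx₀] using hu₁
  have hxu₁ : HasSum (fun n : ℕ => (n : ℝ) * a n * x ^ n) (x * deriv u x) := by
    simpa only [pow_one] using (hasSum_mul_pow_iff_of_eq_nat_add (b := fun n : ℕ => (n : ℝ) * a n)
      1 hx₀ (by simp) (fun n => by push_cast; ring)).mp hu₁
  have hx2u₂ : HasSum (fun n : ℕ => (n : ℝ) * ((n : ℝ) - 1) * a n * x ^ n)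
      (x ^ 2 * deriv (deriv u) x) :=
    (hasSum_mul_pow_iff_of_eq_nat_add (b := fun n : ℕ => (n : ℝ) * ((n : ℝ) - 1) * a n) 2 hx₀
      (by intro i hi; interval_cases i <;> simp) (fun n => by push_cast; ring)).mp hu₂
  have hsum := (((((hu₂.add (hu₁_div.mul_left α)).sub hx2u₂).add (hxu₁.mul_left β)).sub
    (hu₀.mul_left γ)).add (hg₀.mul_left δ))
  have hterms : ∀ n : ℕ, ((n : ℝ) + 2) * ((n : ℝ) + 1) * a (n + 2) * x ^ n
      + α * (((n : ℝ) + 2) * a (n + 2) * x ^ n) - (n : ℝ) * ((n : ℝ) - 1) * a n * x ^ n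
      + β * ((n : ℝ) * a n * x ^ n) - γ * (a n * x ^ n) + δ * (c n * x ^ n) = 0 := fun n => by
    linear_combination x ^ n * hrec n
  simp only [hterms] at hsum
  linear_combination hsum.unique hasSum_zero

theorem abs_quadratic_le (k : ℕ) (β γ : ℝ) :
    |(k : ℝ) * ((k : ℝ) - 1 - β) + γ| ≤ (1 + |β| + |γ|) * ((k : ℝ) + 1) ^ 2 := by
  have hk := k.cast_nonneg (α := ℝ)
  rw [abs_le]
  constructor <;> nlinarith [abs_nonneg β, abs_nonneg γ, neg_abs_le β, le_abs_self β,
    neg_abs_le γ, le_abs_self γ, mul_nonneg hk (abs_nonneg β), mul_nonneg hk hk]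

/-- The truncation `j < k + 2` only makes the recursion well founded; see `seriesCoeff_add_two`. -/
noncomputable def seriesCoeff (p : ℕ) (α β γ δ c : ℝ) : ℕ → ℝ
  | 0 => c
  | 1 => 0
  | k + 2 =>
    (((k : ℝ) * ((k : ℝ) - 1 - β) + γ) * seriesCoeff p α β γ δ c k
        - δ * coeff k ((mk fun j => if _ : j < k + 2 then seriesCoeff p α β γ δ c j else 0) ^ p))
      / (((k : ℝ) + 2) * ((k : ℝ) + 1 + α))

variable (p : ℕ) (α β γ δ c : ℝ)

@[simp]
theorem seriesCoeff_zero : seriesCoeff p α β γ δ c 0 = c := by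
  rw [seriesCoeff]

@[simp]
theorem seriesCoeff_one : seriesCoeff p α β γ δ c 1 = 0 := by
  rw [seriesCoeff]

theorem seriesCoeff_add_two (k : ℕ) :
    seriesCoeff p α β γ δ c (k + 2)
      = (((k : ℝ) * ((k : ℝ) - 1 - β) + γ) * seriesCoeff p α β γ δ c k
          - δ * coeff k ((mk (seriesCoeff p α β γ δ c)) ^ p))
        / (((k : ℝ) + 2) * ((k : ℝ) + 1 + α)) := by
  rw [seriesCoeff]
  congr 3
  refine coeff_pow_eq_of_trunc_eq ?_ p
  ext j
  simp only [coeff_trunc, coeff_mk]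
  split_ifs <;> first | rfl | omega

theorem abs_seriesCoeff_le {M R : ℝ} (hα : 0 ≤ α) (hc : |c| ≤ M) (hR : 0 ≤ R)
    (hMR : 9 * ((1 + |β| + |γ|) * M + |δ| * (8 * M) ^ p) ≤ M * R ^ 2) (n : ℕ) :
    |seriesCoeff p α β γ δ c n| ≤ M * R ^ n * invSqSucc n := by
  have hM : 0 ≤ M := (abs_nonneg c).trans hc
  induction n using Nat.strong_induction_on with
  | _ n ih =>
  rcases n with _ | _ | k
  · simpa [invSqSucc] using hc
  · simpa using mul_nonneg (mul_nonneg hM hR) (invSqSucc_pos 1).le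
  · set a := seriesCoeff p α β γ δ c
    set K := (1 + |β| + |γ|) * M + |δ| * (8 * M) ^ p
    set E := R ^ k * invSqSucc k
    have hE : 0 ≤ E := mul_nonneg (pow_nonneg hR k) (invSqSucc_pos k).le
    have hak : |a k| ≤ M * E := by simpa only [E, mul_assoc] using ih k (by omega)
    have hck : |coeff k (mk a ^ p)| ≤ (8 * M) ^ p * E := by
      simpa only [E, mul_assoc] using
        abs_coeff_pow_le hR (fun j hj => by rw [coeff_mk]; exact ih j (by omega)) p
    have hk : (1 : ℝ) ≤ ((k : ℝ) + 1) ^ 2 := by nlinarith [k.cast_nonneg (α := ℝ)]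
    have hD : ((k : ℝ) + 1) ^ 2 ≤ ((k : ℝ) + 2) * ((k : ℝ) + 1 + α) := by
      nlinarith [k.cast_nonneg (α := ℝ)]
    have hD₀ : 0 < ((k : ℝ) + 2) * ((k : ℝ) + 1 + α) := by positivity
    have hnum : |((k : ℝ) * ((k : ℝ) - 1 - β) + γ) * a k - δ * coeff k (mk a ^ p)|
        ≤ K * ((k : ℝ) + 1) ^ 2 * E := by
      have hδ : |δ| * ((8 * M) ^ p * E) ≤ |δ| * ((8 * M) ^ p * E) * ((k : ℝ) + 1) ^ 2 :=
        le_mul_of_one_le_right (by positivity) hk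
      calc _ ≤ |(k : ℝ) * ((k : ℝ) - 1 - β) + γ| * |a k| + |δ| * |coeff k (mk a ^ p)| := by
            rw [← abs_mul, ← abs_mul]; exact abs_sub _ _
        _ ≤ (1 + |β| + |γ|) * ((k : ℝ) + 1) ^ 2 * (M * E) + |δ| * ((8 * M) ^ p * E) := by
            gcongr
            exact abs_quadratic_le k β γ
        _ ≤ K * ((k : ℝ) + 1) ^ 2 * E := by linarith
    calc |a (k + 2)|
        = |((k : ℝ) * ((k : ℝ) - 1 - β) + γ) * a k - δ * coeff k (mk a ^ p)|
            / (((k : ℝ) + 2) * ((k : ℝ) + 1 + α)) := by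
          rw [show a (k + 2) = _ from seriesCoeff_add_two p α β γ δ c k, abs_div,
            abs_of_pos hD₀]
      _ ≤ K * ((k : ℝ) + 1) ^ 2 * E / ((k : ℝ) + 1) ^ 2 :=
          div_le_div₀ (by positivity) hnum (by positivity) hD
      _ = K * R ^ k * invSqSucc k := by field_simp; ring
      _ ≤ K * R ^ k * (9 * invSqSucc (k + 2)) := by
          gcongr; exact invSqSucc_le_nine_mul_add_two k
      _ = 9 * K * R ^ k * invSqSucc (k + 2) := by ring
      _ ≤ M * R ^ 2 * R ^ k * invSqSucc (k + 2) := by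
          gcongr; exact (invSqSucc_pos _).le
      _ = M * R ^ (k + 2) * invSqSucc (k + 2) := by ring

theorem exists_abs_seriesCoeff_le (hα : 0 ≤ α) :
    ∃ M R : ℝ, 0 < R ∧ ∀ n, |seriesCoeff p α β γ δ c n| ≤ M * R ^ n := by
  set M := |c| + 1
  set K := (1 + |β| + |γ|) * M + |δ| * (8 * M) ^ p
  have hK : 0 ≤ K := by positivity
  refine ⟨M, 9 * K + 1, by positivity, fun n => ?_⟩
  have hMR : 9 * K ≤ M * (9 * K + 1) ^ 2 := by nlinarith [abs_nonneg c]
  calc |seriesCoeff p α β γ δ c n| ≤ M * (9 * K + 1) ^ n * invSqSucc n :=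
        abs_seriesCoeff_le p α β γ δ c hα (by linarith) (by positivity) hMR n
    _ ≤ M * (9 * K + 1) ^ n := mul_le_of_le_one_right (by positivity) (invSqSucc_le_one n)

end ExampleEquation

theorem exampleEquation_local_analytic_solution_at_zero_general
    (p : ℕ) (α β γ δ : ℝ) (hα : 0 < α) :
    ∀ c : ℝ, ∃ ε > (0 : ℝ), ∃ u : ℝ → ℝ,
      AnalyticOnNhd ℝ u (Ioo (-ε) ε) ∧ u 0 = c ∧ deriv u 0 = 0 ∧
      (∀ x ∈ Ioo (0 : ℝ) ε,
        (1 - x ^ 2) * deriv (deriv u) x + (α / x + β * x) * deriv u x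
          - γ * u x + δ * u x ^ p = 0) ∧
      iteratedDeriv 0 u 0 / (Nat.factorial 0 : ℝ) = c ∧
      iteratedDeriv 1 u 0 / (Nat.factorial 1 : ℝ) = 0 ∧
      ∀ k : ℕ,
        iteratedDeriv (k + 2) u 0 / (Nat.factorial (k + 2) : ℝ)
          = (((k : ℝ) * ((k : ℝ) - 1 - β) + γ)
                * (iteratedDeriv k u 0 / (Nat.factorial k : ℝ))
              - δ * (iteratedDeriv k (fun x => u x ^ p) 0 / (Nat.factorial k : ℝ)))
            / (((k : ℝ) + 2) * ((k : ℝ) + 1 + α)) := by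
  intro c
  set a := ExampleEquation.seriesCoeff p α β γ δ c
  obtain ⟨M, R, hR, ha⟩ := ExampleEquation.exists_abs_seriesCoeff_le p α β γ δ c hα.le
  set r := ENNReal.ofReal R⁻¹
  have hr : 0 < r := ENNReal.ofReal_pos.mpr (inv_pos.mpr hR)
  have hrad : r ≤ (ofScalars ℝ a).radius := le_radius_ofScalars_of_norm_le hR ha
  set u := (ofScalars ℝ a).sum
  have hu : HasFPowerSeriesOnBall u (ofScalars ℝ a) 0 r :=
    ((ofScalars ℝ a).hasFPowerSeriesOnBall (hr.trans_le hrad)).mono hr hrad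
  have hup : HasFPowerSeriesOnBall (fun x => u x ^ p) (ofScalars ℝ (coeff · (mk a ^ p))) 0 r :=
    HasFPowerSeriesOnBall.pow_ofScalars (by simpa only [coeff_mk] using hu) p
  have hball : Metric.eball (0 : ℝ) r = Ioo (-R⁻¹) R⁻¹ := by
    rw [Metric.eball_ofReal, Real.ball_eq_Ioo, zero_sub, zero_add]
  have hrec (k : ℕ) : a (k + 2) = _ := ExampleEquation.seriesCoeff_add_two p α β γ δ c k
  have hTaylor := hu.hasFPowerSeriesAt.iteratedDeriv_div_factorial
  have hTaylor_pow := hup.hasFPowerSeriesAt.iteratedDeriv_div_factorial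
  refine ⟨R⁻¹, inv_pos.mpr hR, u, hball ▸ hu.analyticOnNhd, by simpa [a] using hTaylor 0,
    by simpa [a] using hTaylor 1, fun x hx => ?_, by simpa [a] using hTaylor 0,
    by simpa [a] using hTaylor 1, fun k => by rw [hTaylor, hTaylor, hTaylor_pow, hrec]⟩
  exact ExampleEquation.exampleEquation_of_hasFPowerSeriesOnBall hu hup (by simp [a])
    (fun k => by rw [hrec, mul_div_cancel₀ _ (by positivity)])
    (hball ▸ Ioo_subset_Ioo_left (neg_lt_zero.mpr (inv_pos.mpr hR)).le hx) hx.1.ne'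

/-- Local analytic solution of the example equation at `x = 0` with
`u(0) = c`, `u'(0) = 0`, whose Taylor coefficients `a_k = u^{(k)}(0)/k!` satisfy the
recurrence `a_{k+2} = [(k(k-1-β)+γ)a_k - δ c_k] / ((k+2)(k+1+α))`, where `c_k` are the
Taylor coefficients of `u^p` at `0`. -/
theorem exampleEquation_local_analytic_solution_at_zero
    (p : ℕ) (hp : 1 < p) (α β γ δ : ℝ) (hα : 0 < α) (hδ : δ ≠ 0) :
    ∀ c : ℝ, ∃ ε > (0 : ℝ), ∃ u : ℝ → ℝ,
      AnalyticOnNhd ℝ u (Ioo (-ε) ε) ∧ u 0 = c ∧ deriv u 0 = 0 ∧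
      (∀ x ∈ Ioo (0 : ℝ) ε,
        (1 - x ^ 2) * deriv (deriv u) x + (α / x + β * x) * deriv u x
          - γ * u x + δ * u x ^ p = 0) ∧
      iteratedDeriv 0 u 0 / (Nat.factorial 0 : ℝ) = c ∧
      iteratedDeriv 1 u 0 / (Nat.factorial 1 : ℝ) = 0 ∧
      ∀ k : ℕ,
        iteratedDeriv (k + 2) u 0 / (Nat.factorial (k + 2) : ℝ)
          = (((k : ℝ) * ((k : ℝ) - 1 - β) + γ)
                * (iteratedDeriv k u 0 / (Nat.factorial k : ℝ))
              - δ * (iteratedDeriv k (fun x => u x ^ p) 0 / (Nat.factorial k : ℝ)))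
            / (((k : ℝ) + 2) * ((k : ℝ) + 1 + α)) :=
  exampleEquation_local_analytic_solution_at_zero_general p α β γ δ hα
end

section
/- Let u be twice differentiable on an open interval I ⊆ (0, 1) and satisfy the example equation on I. Then the function H(x) := (1 − x²)·u'(x)²/2 − γ·u(x)²/2 + (δ/(p+1))·u(x)^{p+1} is differentiable on I and H'(x) = −((1+β)x + α/x)·u'(x)² for every x ∈ I. -/
set_option autoImplicit false

open Real Set

/-!
Multiplying the equation by `u'` turns it into an exact derivative up to a dissipation term:
for `a u'' + b u' + f(u) = 0` and `F' = f`, the energy `a u'²/2 + F(u)` has derivative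
`(a'/2 - b) u'²`. Here `a = 1 - x²`, `b = α/x + βx` and `F(u) = -γu²/2 + δu^{p+1}/(p+1)`.
-/

theorem hasDerivAt_energy_of_ode {a u F : ℝ → ℝ} {a' b u'' f x : ℝ}
    (ha : HasDerivAt a a' x) (hu : HasDerivAt u (deriv u x) x)
    (hu' : HasDerivAt (deriv u) u'' x) (hF : HasDerivAt F f (u x))
    (hode : a x * u'' + b * deriv u x + f = 0) :
    HasDerivAt (fun y => a y * deriv u y ^ 2 / 2 + F (u y))
      ((a' / 2 - b) * deriv u x ^ 2) x := by
  have h := ((ha.mul (hu'.pow 2)).div_const 2).add (hF.comp x hu)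
  refine h.congr_deriv ?_
  simp only [Pi.pow_apply, Nat.cast_ofNat, Nat.add_one_sub_one, pow_one]
  linear_combination deriv u x * hode

theorem hasDerivAt_quadratic_add_pow_succ (n : ℕ) (c d y : ℝ) :
    HasDerivAt (fun z : ℝ => -(c * z ^ 2 / 2) + d / ((n : ℝ) + 1) * z ^ (n + 1))
      (-(c * y) + d * y ^ n) y := by
  have h := (((hasDerivAt_pow 2 y).const_mul c).div_const 2).neg.add
    ((hasDerivAt_pow (n + 1) y).const_mul (d / ((n : ℝ) + 1)))
  refine h.congr_deriv ?_
  have hn : (n : ℝ) + 1 ≠ 0 := by positivity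
  push_cast
  field_simp

theorem exampleEquation_lyapunov_derivative_general
    (p : ℕ) (α β γ δ : ℝ)
    (s t : ℝ)
    (u : ℝ → ℝ)
    (hdiff : ∀ x ∈ Ioo s t, DifferentiableAt ℝ u x)
    (hdiff2 : ∀ x ∈ Ioo s t, DifferentiableAt ℝ (deriv u) x)
    (heq : ∀ x ∈ Ioo s t,
      (1 - x ^ 2) * deriv (deriv u) x + (α / x + β * x) * deriv u x
        - γ * u x + δ * u x ^ p = 0) :
    ∀ x ∈ Ioo s t,
      HasDerivAt
        (fun x : ℝ => (1 - x ^ 2) * (deriv u x) ^ 2 / 2 - γ * (u x) ^ 2 / 2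
          + δ / ((p : ℝ) + 1) * u x ^ (p + 1))
        (-(((1 + β) * x + α / x) * (deriv u x) ^ 2)) x := by
  intro x hx
  have hcoeff : HasDerivAt (fun y : ℝ => 1 - y ^ 2) (-(2 * x)) x := by
    simpa using (hasDerivAt_pow 2 x).const_sub 1
  have h := hasDerivAt_energy_of_ode (b := α / x + β * x) hcoeff (hdiff x hx).hasDerivAt
    (hdiff2 x hx).hasDerivAt (hasDerivAt_quadratic_add_pow_succ p γ δ (u x))
    (by linear_combination heq x hx)
  convert h using 1
  · funext y
    ring
  · ring

/-- Along a twice differentiable solution of the example equation on an open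
interval `I ⊆ (0,1)`, the Lyapunov function
`H(x) = (1-x²)u'(x)²/2 - γu(x)²/2 + (δ/(p+1))u(x)^{p+1}` is differentiable with
`H'(x) = -((1+β)x + α/x) u'(x)²`. -/
theorem exampleEquation_lyapunov_derivative
    (p : ℕ) (hp : 1 < p) (α β γ δ : ℝ) (hα : 0 < α) (hδ : δ ≠ 0)
    (s t : ℝ) (hI : Ioo s t ⊆ Ioo (0 : ℝ) 1)
    (u : ℝ → ℝ)
    (hdiff : ∀ x ∈ Ioo s t, DifferentiableAt ℝ u x)
    (hdiff2 : ∀ x ∈ Ioo s t, DifferentiableAt ℝ (deriv u) x)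
    (heq : ∀ x ∈ Ioo s t,
      (1 - x ^ 2) * deriv (deriv u) x + (α / x + β * x) * deriv u x
        - γ * u x + δ * u x ^ p = 0) :
    ∀ x ∈ Ioo s t,
      HasDerivAt
        (fun x : ℝ => (1 - x ^ 2) * (deriv u x) ^ 2 / 2 - γ * (u x) ^ 2 / 2
          + δ / ((p : ℝ) + 1) * u x ^ (p + 1))
        (-(((1 + β) * x + α / x) * (deriv u x) ^ 2)) x :=
  exampleEquation_lyapunov_derivative_general p α β γ δ s t u hdiff hdiff2 heq
end

section
/- For every c ∈ ℝ there exist ε > 0 and a function u that is real-analytic on (−ε, ε), with u(0) = c and u'(0) = 0, which satisfies the generalized Lane–Emden equation for all x ∈ (0, ε); moreover its Taylor coefficients a_k = u^{(k)}(0)/k! satisfy a_0 = c, a_1 = 0 and, for all k ≥ 0, (k+2)(k+1+α)·a_{k+2} = −δ·c_k, where c_k denotes the k-th Taylor coefficient of the function u^p at 0. -/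
set_option autoImplicit false

/-!
Define `a` by `a 0 = c`, `a 1 = 0` and `(k + 2) (k + 1 + α) a (k + 2) = -δ [Xᵏ] (∑ aₙ Xⁿ)ᵖ`; the
right-hand side only involves `a 0, …, a k`. The weights `1 / (n + 1)²` are stable under
convolution up to a factor `8`, so induction gives `|aₙ| ≤ M rⁿ / (n + 1)²` once
`r² ≥ 9 |δ| (8 M)ᵖ`, and `u = ∑ aₙ xⁿ` is analytic on `(-1/r, 1/r)`. By the Leibniz rule the
Maclaurin series of `x u'' + α u' + δ x uᵖ` is the same expression formed with `∑ aₙ Xⁿ`, which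
vanishes by the recursion. By the identity theorem the function vanishes on the whole interval,
and dividing by `x` gives the equation.
-/

section LaneEmden

open PowerSeries Finset FormalMultilinearSeries
open scoped Nat

section Maclaurin

variable {𝕜 : Type*} [NontriviallyNormedField 𝕜] {f g : 𝕜 → 𝕜}

noncomputable def maclaurinSeries (f : 𝕜 → 𝕜) : 𝕜⟦X⟧ :=
  PowerSeries.mk fun n => iteratedDeriv n f 0 / n !

@[simp]
lemma coeff_maclaurinSeries (f : 𝕜 → 𝕜) (n : ℕ) :
    coeff n (maclaurinSeries f) = iteratedDeriv n f 0 / n ! :=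
  coeff_mk _ _

lemma maclaurinSeries_const (c : 𝕜) : maclaurinSeries (fun _ => c) = C c := by
  ext n
  rcases n with _ | n <;> simp [iteratedDeriv_const, coeff_C]

lemma maclaurinSeries_id : maclaurinSeries (fun x : 𝕜 => x) = X := by
  ext n
  rcases n with _ | _ | n <;> simp [iteratedDeriv_fun_id_zero, coeff_X]

lemma maclaurinSeries_deriv [CharZero 𝕜] :
    maclaurinSeries (deriv f) = d⁄dX 𝕜 (maclaurinSeries f) := by
  ext n
  have : (n ! : 𝕜) ≠ 0 := by exact_mod_cast n.factorial_ne_zero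
  simp only [coeff_maclaurinSeries, coeff_derivative, ← iteratedDeriv_succ', Nat.factorial_succ]
  push_cast
  field_simp

variable [CompleteSpace 𝕜]

lemma hasFPowerSeriesOnBall_ofScalars_sum {a : ℕ → 𝕜} {M r : ℝ} (hr : 0 < r)
    (ha : ∀ n, ‖a n‖ ≤ M * r ^ n) :
    HasFPowerSeriesOnBall (ofScalars 𝕜 a).sum (ofScalars 𝕜 a) 0 (ENNReal.ofReal r⁻¹) := by
  have hradius : ENNReal.ofReal r⁻¹ ≤ (ofScalars 𝕜 a).radius := by
    refine le_radius_of_bound _ M fun n => ?_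
    rw [ofScalars_norm, Real.coe_toNNReal _ (by positivity), inv_pow, ← div_eq_mul_inv,
      div_le_iff₀ (by positivity)]
    exact ha n
  have hpos : 0 < ENNReal.ofReal r⁻¹ := by simpa using hr
  exact ((ofScalars 𝕜 a).hasFPowerSeriesOnBall (hpos.trans_le hradius)).mono hpos hradius

lemma maclaurinSeries_add (hf : AnalyticAt 𝕜 f 0) (hg : AnalyticAt 𝕜 g 0) :
    maclaurinSeries (fun x => f x + g x) = maclaurinSeries f + maclaurinSeries g := by
  ext n
  simp [iteratedDeriv_fun_add hf.contDiffAt hg.contDiffAt, add_div]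

variable [CharZero 𝕜]

lemma HasFPowerSeriesAt.maclaurinSeries_eq {a : ℕ → 𝕜}
    (h : HasFPowerSeriesAt f (ofScalars 𝕜 a) 0) : maclaurinSeries f = PowerSeries.mk a := by
  have := ofScalars_series_injective 𝕜 𝕜
    (h.eq_formalMultilinearSeries h.analyticAt.hasFPowerSeriesAt)
  ext n
  simp [this]

lemma maclaurinSeries_mul (hf : AnalyticAt 𝕜 f 0) (hg : AnalyticAt 𝕜 g 0) :
    maclaurinSeries (fun x => f x * g x) = maclaurinSeries f * maclaurinSeries g := by
  ext n
  rw [coeff_maclaurinSeries, iteratedDeriv_fun_mul hf.contDiffAt hg.contDiffAt, coeff_mul,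
    Nat.sum_antidiagonal_eq_sum_range_succ_mk, sum_div]
  refine sum_congr rfl fun i hi => ?_
  have : (n ! : 𝕜) ≠ 0 := by exact_mod_cast n.factorial_ne_zero
  rw [coeff_maclaurinSeries, coeff_maclaurinSeries,
    Nat.cast_choose 𝕜 (Nat.lt_succ_iff.mp (mem_range.mp hi))]
  field_simp

lemma maclaurinSeries_pow (hf : AnalyticAt 𝕜 f 0) (q : ℕ) :
    maclaurinSeries (fun x => f x ^ q) = maclaurinSeries f ^ q := by
  induction q with
  | zero => simpa using maclaurinSeries_const (1 : 𝕜)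
  | succ q ih =>
    rw [pow_succ, ← ih, ← maclaurinSeries_mul (f := fun x => f x ^ q) (hf.pow q) hf]
    simp only [pow_succ]

lemma AnalyticOnNhd.eqOn_zero_of_maclaurinSeries_eq_zero {U : Set 𝕜} (hf : AnalyticOnNhd 𝕜 f U)
    (hU : IsPreconnected U) (h₀ : 0 ∈ U) (h : maclaurinSeries f = 0) : Set.EqOn f 0 U := by
  have hcoeff : (fun n => iteratedDeriv n f 0 / n !) = 0 := by
    ext n
    simpa using congr(coeff n $h)
  have hseries := (hf 0 h₀).hasFPowerSeriesAt
  rw [hcoeff, ofScalars_series_eq_zero_of_scalar_zero] at hseries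
  exact hf.eqOn_zero_of_preconnected_of_eventuallyEq_zero hU h₀ hseries.eventually_eq_zero

end Maclaurin

lemma le_of_mem_finsuppAntidiag {ι : Type*} [DecidableEq ι] {s : Finset ι} {n : ℕ} {l : ι →₀ ℕ}
    (hl : l ∈ finsuppAntidiag s n) (i : ι) : l i ≤ n := by
  rw [mem_finsuppAntidiag] at hl
  by_cases hi : i ∈ s
  · exact hl.1 ▸ single_le_sum (fun j _ => Nat.zero_le (l j)) hi
  · simp [Finsupp.notMem_support_iff.mp (fun h => hi (hl.2 h))]

-- The sum is `coeff k (mk a ^ p)` (`laneEmdenCoeff_add_two`), spelled out so that the recursive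
-- calls visibly only involve indices `≤ k`.
noncomputable def laneEmdenCoeff (p : ℕ) (α δ c : ℝ) : ℕ → ℝ
  | 0 => c
  | 1 => 0
  | k + 2 => -δ / ((k + 2) * (k + 1 + α)) *
      ∑ l ∈ (finsuppAntidiag (range p) k).attach, ∏ i ∈ range p, laneEmdenCoeff p α δ c (l.1 i)
decreasing_by
  have := le_of_mem_finsuppAntidiag l.2 i
  omega

section

variable (p : ℕ) (α δ c : ℝ)

lemma laneEmdenCoeff_zero : laneEmdenCoeff p α δ c 0 = c := by rw [laneEmdenCoeff]

lemma laneEmdenCoeff_one : laneEmdenCoeff p α δ c 1 = 0 := by rw [laneEmdenCoeff]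

lemma laneEmdenCoeff_add_two (k : ℕ) :
    laneEmdenCoeff p α δ c (k + 2) =
      -δ / ((k + 2) * (k + 1 + α)) * coeff k (PowerSeries.mk (laneEmdenCoeff p α δ c) ^ p) := by
  rw [laneEmdenCoeff, coeff_pow]
  simp only [coeff_mk]
  exact congrArg _ (sum_attach _ fun l : ℕ →₀ ℕ => ∏ i ∈ range p, laneEmdenCoeff p α δ c (l i))

end

noncomputable def invSuccSq (n : ℕ) : ℝ := ((n + 1) ^ 2)⁻¹

lemma invSuccSq_pos (n : ℕ) : 0 < invSuccSq n := by unfold invSuccSq; positivity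

lemma invSuccSq_le_one (n : ℕ) : invSuccSq n ≤ 1 :=
  inv_le_one_of_one_le₀ (one_le_pow₀ (by simp))

lemma sum_range_invSuccSq_le (n : ℕ) : ∑ i ∈ range n, invSuccSq i ≤ 2 := by
  have h := sum_Ioo_inv_sq_le (α := ℝ) 0 (n + 1)
  rw [← Finset.Ico_add_one_left_eq_Ioo, Finset.sum_Ico_eq_sum_range] at h
  simpa [invSuccSq, add_comm] using h

-- `1 / (x y) = (1 / x + 1 / y) / (x + y)` with `x = i + 1`, `y = j + 1`, squared, plus
-- `(a + b)² ≤ 2 (a² + b²)`.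
lemma invSuccSq_mul_invSuccSq_le {i j k : ℕ} (h : i + j = k) :
    invSuccSq i * invSuccSq j ≤ 2 * ((k + 2 : ℝ) ^ 2)⁻¹ * (invSuccSq i + invSuccSq j) := by
  have hk : (k + 2 : ℝ) = (i + 1) + (j + 1) := by rw [← h]; push_cast; ring
  rw [hk]
  unfold invSuccSq
  have hi : (0 : ℝ) < i + 1 := by positivity
  have hj : (0 : ℝ) < j + 1 := by positivity
  rw [← sub_nonneg]
  have key : 2 * (((i + 1 : ℝ) + (j + 1)) ^ 2)⁻¹ * (((i + 1 : ℝ) ^ 2)⁻¹ + ((j + 1 : ℝ) ^ 2)⁻¹) -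
      ((i + 1 : ℝ) ^ 2)⁻¹ * ((j + 1 : ℝ) ^ 2)⁻¹ =
      ((i : ℝ) - j) ^ 2 / ((i + 1) ^ 2 * (j + 1) ^ 2 * ((i + 1) + (j + 1)) ^ 2) := by
    field_simp
    ring
  rw [key]
  positivity

lemma sum_antidiagonal_invSuccSq_mul_le (k : ℕ) :
    ∑ ij ∈ antidiagonal k, invSuccSq ij.1 * invSuccSq ij.2 ≤ 8 * invSuccSq k := by
  have hfst : ∑ ij ∈ antidiagonal k, invSuccSq ij.1 ≤ 2 := by
    rw [Nat.sum_antidiagonal_eq_sum_range_succ_mk]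
    exact sum_range_invSuccSq_le (k + 1)
  have hsnd : ∑ ij ∈ antidiagonal k, invSuccSq ij.2 ≤ 2 := by
    rwa [← Nat.sum_antidiagonal_swap] at hfst
  have hk : ((k + 2 : ℝ) ^ 2)⁻¹ ≤ invSuccSq k := by
    unfold invSuccSq
    gcongr
    linarith
  calc ∑ ij ∈ antidiagonal k, invSuccSq ij.1 * invSuccSq ij.2
      ≤ ∑ ij ∈ antidiagonal k, 2 * ((k + 2 : ℝ) ^ 2)⁻¹ * (invSuccSq ij.1 + invSuccSq ij.2) :=
        sum_le_sum fun ij hij => invSuccSq_mul_invSuccSq_le (mem_antidiagonal.mp hij)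
    _ = 2 * ((k + 2 : ℝ) ^ 2)⁻¹ *
          (∑ ij ∈ antidiagonal k, invSuccSq ij.1 + ∑ ij ∈ antidiagonal k, invSuccSq ij.2) := by
        rw [← sum_add_distrib, mul_sum]
    _ ≤ 2 * ((k + 2 : ℝ) ^ 2)⁻¹ * (2 + 2) := by gcongr
    _ ≤ 8 * invSuccSq k := by linarith

lemma coeff_mk_invSuccSq_pow_le (q k : ℕ) :
    coeff k (PowerSeries.mk invSuccSq ^ q) ≤ 8 ^ q * invSuccSq k := by
  induction q generalizing k with
  | zero =>
    rcases k with _ | k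
    · simp [invSuccSq]
    · simpa [coeff_one] using (invSuccSq_pos _).le
  | succ q ih =>
    rw [pow_succ', coeff_mul]
    calc ∑ ij ∈ antidiagonal k, coeff ij.1 (PowerSeries.mk invSuccSq) *
          coeff ij.2 (PowerSeries.mk invSuccSq ^ q)
        ≤ ∑ ij ∈ antidiagonal k, invSuccSq ij.1 * (8 ^ q * invSuccSq ij.2) :=
          sum_le_sum fun ij _ => by
            rw [coeff_mk]
            exact mul_le_mul_of_nonneg_left (ih ij.2) (invSuccSq_pos _).le
      _ = 8 ^ q * ∑ ij ∈ antidiagonal k, invSuccSq ij.1 * invSuccSq ij.2 := by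
          rw [mul_sum]
          exact sum_congr rfl fun _ _ => by ring
      _ ≤ 8 ^ q * (8 * invSuccSq k) := by gcongr; exact sum_antidiagonal_invSuccSq_mul_le k
      _ = 8 ^ (q + 1) * invSuccSq k := by ring

lemma abs_coeff_mk_pow_le {f g : ℕ → ℝ} (q k : ℕ) (h : ∀ n ≤ k, |f n| ≤ g n) :
    |coeff k (PowerSeries.mk f ^ q)| ≤ coeff k (PowerSeries.mk g ^ q) := by
  simp only [coeff_pow, coeff_mk]
  refine (abs_sum_le_sum_abs _ _).trans (sum_le_sum fun l hl => ?_)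
  rw [abs_prod]
  exact prod_le_prod (fun _ _ => abs_nonneg _) fun i _ => h _ (le_of_mem_finsuppAntidiag hl i)

lemma coeff_mk_geometric_mul_pow (M r : ℝ) (w : ℕ → ℝ) (q k : ℕ) :
    coeff k (PowerSeries.mk (fun n => M * r ^ n * w n) ^ q) =
      M ^ q * r ^ k * coeff k (PowerSeries.mk w ^ q) := by
  have : PowerSeries.mk (fun n => M * r ^ n * w n) = C M * rescale r (PowerSeries.mk w) := by
    ext n
    simp [coeff_rescale, mul_assoc]
  rw [this, mul_pow, ← map_pow, ← map_pow, coeff_C_mul, coeff_rescale, mul_assoc]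

lemma invSuccSq_le_nine_mul_invSuccSq_add_two (k : ℕ) :
    invSuccSq k ≤ 9 * invSuccSq (k + 2) := by
  unfold invSuccSq
  rw [← div_eq_mul_inv, le_div_iff₀ (by positivity), ← div_eq_inv_mul,
    div_le_iff₀ (by positivity)]
  push_cast
  nlinarith [k.cast_nonneg (α := ℝ)]

lemma abs_coeff_mk_pow_le_of_abs_le {f : ℕ → ℝ} {M r : ℝ} (hM : 0 ≤ M) (hr : 0 ≤ r) (q k : ℕ)
    (hf : ∀ n ≤ k, |f n| ≤ M * r ^ n * invSuccSq n) :
    |coeff k (PowerSeries.mk f ^ q)| ≤ M ^ q * r ^ k * (8 ^ q * invSuccSq k) := by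
  calc _ ≤ coeff k (PowerSeries.mk (fun n => M * r ^ n * invSuccSq n) ^ q) :=
        abs_coeff_mk_pow_le q k hf
    _ = M ^ q * r ^ k * coeff k (PowerSeries.mk invSuccSq ^ q) :=
        coeff_mk_geometric_mul_pow M r invSuccSq q k
    _ ≤ M ^ q * r ^ k * (8 ^ q * invSuccSq k) := by
        gcongr
        exact coeff_mk_invSuccSq_pow_le q k

lemma abs_laneEmdenCoeff_le (p : ℕ) {α : ℝ} (δ c : ℝ) (hα : 0 < α) {M r : ℝ} (hM : 1 ≤ M)
    (hcM : |c| ≤ M) (hr : 0 ≤ r) (hr2 : 9 * |δ| * (8 * M) ^ p ≤ r ^ 2) (n : ℕ) :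
    |laneEmdenCoeff p α δ c n| ≤ M * r ^ n * invSuccSq n := by
  induction n using Nat.strong_induction_on with
  | _ n ih =>
    match n with
    | 0 => simpa [laneEmdenCoeff_zero, invSuccSq] using hcM
    | 1 =>
      rw [laneEmdenCoeff_one, abs_zero]
      exact mul_nonneg (by positivity) (invSuccSq_pos 1).le
    | k + 2 =>
      have hpow := abs_coeff_mk_pow_le_of_abs_le (by linarith) hr p k fun n hn => ih n (by omega)
      have hw := invSuccSq_le_nine_mul_invSuccSq_add_two k
      have hD : 1 ≤ ((k : ℝ) + 2) * (k + 1 + α) := by nlinarith [k.cast_nonneg (α := ℝ)]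
      rw [laneEmdenCoeff_add_two, abs_mul, abs_div, abs_neg,
        abs_of_pos (a := ((k : ℝ) + 2) * (k + 1 + α)) (by linarith)]
      calc |δ| / (((k : ℝ) + 2) * (k + 1 + α)) *
            |coeff k (PowerSeries.mk (laneEmdenCoeff p α δ c) ^ p)|
          ≤ |δ| * (M ^ p * r ^ k * (8 ^ p * invSuccSq k)) := by
            gcongr
            exact div_le_self (abs_nonneg δ) hD
        _ ≤ |δ| * (M ^ p * r ^ k * (8 ^ p * (9 * invSuccSq (k + 2)))) := by gcongr
        _ = 9 * |δ| * (8 * M) ^ p * (r ^ k * invSuccSq (k + 2)) := by ring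
        _ ≤ r ^ 2 * (r ^ k * invSuccSq (k + 2)) := by
            gcongr
            exact mul_nonneg (by positivity) (invSuccSq_pos _).le
        _ ≤ M * (r ^ 2 * (r ^ k * invSuccSq (k + 2))) :=
            le_mul_of_one_le_left (mul_nonneg (by positivity)
              (mul_nonneg (by positivity) (invSuccSq_pos _).le)) hM
        _ = M * r ^ (k + 2) * invSuccSq (k + 2) := by ring

lemma exists_abs_laneEmdenCoeff_le_geometric (p : ℕ) {α : ℝ} (δ c : ℝ) (hα : 0 < α) :
    ∃ r > 0, ∀ n, ‖laneEmdenCoeff p α δ c n‖ ≤ (|c| + 1) * r ^ n := by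
  set M := |c| + 1
  set r := 1 + 9 * |δ| * (8 * M) ^ p
  have hr : 1 ≤ r := le_add_of_nonneg_right (by positivity)
  refine ⟨r, by positivity, fun n => ?_⟩
  calc ‖laneEmdenCoeff p α δ c n‖ ≤ M * r ^ n * invSuccSq n :=
        abs_laneEmdenCoeff_le p δ c hα (by simp [M]) (by simp [M]) (by positivity) (by nlinarith) n
    _ ≤ M * r ^ n := mul_le_of_le_one_right (by positivity) (invSuccSq_le_one n)

lemma laneEmdenCoeff_recurrence (p : ℕ) {α : ℝ} (δ c : ℝ) (hα : 0 < α) (k : ℕ) :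
    (k + 2) * (k + 1 + α) * laneEmdenCoeff p α δ c (k + 2) =
      -δ * coeff k (PowerSeries.mk (laneEmdenCoeff p α δ c) ^ p) := by
  rw [laneEmdenCoeff_add_two]
  have : ((k : ℝ) + 2) * (k + 1 + α) ≠ 0 := by positivity
  field_simp

noncomputable def formalLaneEmden {R : Type*} [CommRing R] (p : ℕ) (α δ : R) (A : R⟦X⟧) : R⟦X⟧ :=
  X * d⁄dX R (d⁄dX R A) + C α * d⁄dX R A + C δ * (X * A ^ p)

lemma formalLaneEmden_eq_zero {R : Type*} [CommRing R] {A : R⟦X⟧} {p : ℕ} {α δ : R}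
    (h1 : coeff 1 A = 0)
    (hrec : ∀ k : ℕ, (k + 2) * (k + 1 + α) * coeff (k + 2) A = -δ * coeff k (A ^ p)) :
    formalLaneEmden p α δ A = 0 := by
  ext n
  rcases n with _ | k
  · simp [formalLaneEmden, coeff_derivative, h1, coeff_zero_X_mul, -coeff_zero_eq_constantCoeff]
  · simp only [formalLaneEmden, map_add, coeff_succ_X_mul, coeff_C_mul, coeff_derivative,
      map_zero]
    push_cast
    linear_combination hrec k

lemma formalLaneEmden_mk_laneEmdenCoeff (p : ℕ) {α : ℝ} (δ c : ℝ) (hα : 0 < α) :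
    formalLaneEmden p α δ (PowerSeries.mk (laneEmdenCoeff p α δ c)) = 0 :=
  formalLaneEmden_eq_zero (by rw [coeff_mk, laneEmdenCoeff_one])
    (by simpa only [coeff_mk] using laneEmdenCoeff_recurrence p δ c hα)

section Analytic

variable {𝕜 : Type*} [NontriviallyNormedField 𝕜] [CompleteSpace 𝕜] [CharZero 𝕜] {u : 𝕜 → 𝕜}
  (p : ℕ) (α δ : 𝕜)

lemma maclaurinSeries_laneEmden (hu : AnalyticAt 𝕜 u 0) :
    maclaurinSeries (fun x => x * deriv (deriv u) x + α * deriv u x + δ * (x * u x ^ p)) =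
      formalLaneEmden p α δ (maclaurinSeries u) := by
  have hu₁ := hu.deriv
  have hu₂ := hu.deriv.deriv
  have hid : AnalyticAt 𝕜 (fun x : 𝕜 => x) 0 := analyticAt_id
  rw [maclaurinSeries_add (by fun_prop) (by fun_prop),
    maclaurinSeries_add (by fun_prop) (by fun_prop),
    maclaurinSeries_mul hid hu₂, maclaurinSeries_mul analyticAt_const hu₁,
    maclaurinSeries_mul analyticAt_const (by fun_prop), maclaurinSeries_mul hid (by fun_prop),
    maclaurinSeries_pow hu, maclaurinSeries_deriv, maclaurinSeries_deriv, maclaurinSeries_id,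
    maclaurinSeries_const, maclaurinSeries_const, formalLaneEmden]

lemma AnalyticOnNhd.eqOn_laneEmden_zero_of_formalLaneEmden {U : Set 𝕜} (hu : AnalyticOnNhd 𝕜 u U)
    (hU : IsPreconnected U) (h₀ : 0 ∈ U) (h : formalLaneEmden p α δ (maclaurinSeries u) = 0) :
    ∀ x ∈ U, x * deriv (deriv u) x + α * deriv u x + δ * (x * u x ^ p) = 0 := by
  have hanalytic : AnalyticOnNhd 𝕜
      (fun x => x * deriv (deriv u) x + α * deriv u x + δ * (x * u x ^ p)) U := fun x hx => by
    have := hu x hx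
    have := hu.deriv x hx
    have := hu.deriv.deriv x hx
    fun_prop
  exact hanalytic.eqOn_zero_of_maclaurinSeries_eq_zero hU h₀
    ((maclaurinSeries_laneEmden p α δ (hu 0 h₀)).trans h)

end Analytic

end LaneEmden

open Real Set

theorem generalizedLaneEmden_local_analytic_solution_at_zero_general
    (p : ℕ) (α δ : ℝ) (hα : 0 < α) :
    ∀ c : ℝ, ∃ ε > (0 : ℝ), ∃ u : ℝ → ℝ,
      AnalyticOnNhd ℝ u (Ioo (-ε) ε) ∧ u 0 = c ∧ deriv u 0 = 0 ∧
      (∀ x ∈ Ioo (0 : ℝ) ε,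
        deriv (deriv u) x + (α / x) * deriv u x + δ * u x ^ p = 0) ∧
      iteratedDeriv 0 u 0 / (Nat.factorial 0 : ℝ) = c ∧
      iteratedDeriv 1 u 0 / (Nat.factorial 1 : ℝ) = 0 ∧
      ∀ k : ℕ,
        ((k : ℝ) + 2) * ((k : ℝ) + 1 + α)
            * (iteratedDeriv (k + 2) u 0 / (Nat.factorial (k + 2) : ℝ))
          = -δ * (iteratedDeriv k (fun x => u x ^ p) 0 / (Nat.factorial k : ℝ)) := by
  intro c
  obtain ⟨r, hr, ha⟩ := exists_abs_laneEmdenCoeff_le_geometric p δ c hα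
  have hu := hasFPowerSeriesOnBall_ofScalars_sum hr ha
  set u := (FormalMultilinearSeries.ofScalars ℝ (laneEmdenCoeff p α δ c)).sum
  have hanalytic : AnalyticOnNhd ℝ u (Ioo (-r⁻¹) r⁻¹) := fun x hx =>
    hu.analyticAt_of_mem (by rwa [Metric.eball_ofReal, Real.ball_eq_Ioo, zero_sub, zero_add])
  have hseries := hu.hasFPowerSeriesAt.maclaurinSeries_eq
  have hcoeff (n : ℕ) : iteratedDeriv n u 0 / n.factorial = laneEmdenCoeff p α δ c n := by
    rw [← coeff_maclaurinSeries, hseries, PowerSeries.coeff_mk]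
  have hode := hanalytic.eqOn_laneEmden_zero_of_formalLaneEmden p α δ isPreconnected_Ioo
    (by simpa using hr) (by rw [hseries]; exact formalLaneEmden_mk_laneEmdenCoeff p δ c hα)
  refine ⟨r⁻¹, by positivity, u, hanalytic, ?_, ?_, ?_, ?_, ?_, ?_⟩
  · simpa [laneEmdenCoeff_zero] using hcoeff 0
  · simpa [laneEmdenCoeff_one] using hcoeff 1
  · intro x hx
    have hx₀ : x ≠ 0 := hx.1.ne'
    field_simp
    linear_combination hode x ⟨(neg_neg_of_pos (inv_pos.mpr hr)).trans hx.1, hx.2⟩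
  · exact (hcoeff 0).trans (laneEmdenCoeff_zero p α δ c)
  · exact (hcoeff 1).trans (laneEmdenCoeff_one p α δ c)
  · intro k
    rw [hcoeff, ← coeff_maclaurinSeries, maclaurinSeries_pow (hanalytic 0 (by simpa using hr)),
      hseries]
    exact laneEmdenCoeff_recurrence p δ c hα k

/-- Local analytic solution of the generalized Lane–Emden equation
`u'' + (α/x)u' + δu^p = 0` at `x = 0` with `u(0) = c`, `u'(0) = 0`, whose Taylor
coefficients `a_k = u^{(k)}(0)/k!` satisfy `(k+2)(k+1+α) a_{k+2} = -δ c_k`, where `c_k`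
are the Taylor coefficients of `u^p` at `0`. -/
theorem generalizedLaneEmden_local_analytic_solution_at_zero
    (p : ℕ) (hp : 1 < p) (α δ : ℝ) (hα : 0 < α) :
    ∀ c : ℝ, ∃ ε > (0 : ℝ), ∃ u : ℝ → ℝ,
      AnalyticOnNhd ℝ u (Ioo (-ε) ε) ∧ u 0 = c ∧ deriv u 0 = 0 ∧
      (∀ x ∈ Ioo (0 : ℝ) ε,
        deriv (deriv u) x + (α / x) * deriv u x + δ * u x ^ p = 0) ∧
      iteratedDeriv 0 u 0 / (Nat.factorial 0 : ℝ) = c ∧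
      iteratedDeriv 1 u 0 / (Nat.factorial 1 : ℝ) = 0 ∧
      ∀ k : ℕ,
        ((k : ℝ) + 2) * ((k : ℝ) + 1 + α)
            * (iteratedDeriv (k + 2) u 0 / (Nat.factorial (k + 2) : ℝ))
          = -δ * (iteratedDeriv k (fun x => u x ^ p) 0 / (Nat.factorial k : ℝ)) :=
  generalizedLaneEmden_local_analytic_solution_at_zero_general p α δ hα
end

section
/- Let f = Σ_{l ≥ 0} a_l X^l be a formal power series with real coefficients, let p be a natural number, and let c_m denote the m-th coefficient of the formal power series f^p. Then c_0 = a_0^p and, for every m ≥ 1, m·a_0·c_m = Σ_{l=1}^{m} (l·p − m + l)·a_l·c_{m−l}. -/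
/-!
Differentiating `f ^ p` gives `f * (f ^ p)' = p * f' * f ^ p`. Multiplying by `X` turns the
derivative into the Euler operator `X * d/dX`, which scales the `m`-th coefficient by `m`, so
comparing `m`-th coefficients yields `∑ a_l (m - l) c_{m-l} = p ∑ l a_l c_{m-l}` over
`0 ≤ l ≤ m`; the `l = 0` term on the left is `m a_0 c_m`, and moving the rest across is the
recurrence.
-/

open Finset

namespace PowerSeries

open scoped PowerSeries

variable {R : Type*}

theorem coeff_X_mul_derivative [CommSemiring R] (f : R⟦X⟧) (m : ℕ) :
    coeff m (X * d⁄dX R f) = m * coeff m f := by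
  cases m with
  | zero => simp
  | succ n => rw [coeff_succ_X_mul, coeff_derivative, mul_comm, Nat.cast_succ]

theorem mul_derivative_pow [CommSemiring R] (f : R⟦X⟧) (p : ℕ) :
    f * d⁄dX R (f ^ p) = p • (d⁄dX R f * f ^ p) := by
  rcases p with _ | p
  · simp
  · rw [Derivation.leibniz_pow, smul_eq_mul, Nat.add_sub_cancel, nsmul_eq_mul, nsmul_eq_mul]
    ring

theorem coeff_mul_eq_add_sum_Icc [CommSemiring R] (f g : R⟦X⟧) (m : ℕ) :
    coeff m (f * g) = coeff 0 f * coeff m g + ∑ l ∈ Icc 1 m, coeff l f * coeff (m - l) g := by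
  rw [coeff_mul, Nat.sum_antidiagonal_eq_sum_range_succ (fun i j => coeff i f * coeff j g),
    sum_range_eq_add_Ico _ (Nat.succ_pos m), Nat.sub_zero, Nat.succ_eq_add_one,
    Ico_add_one_right_eq_Icc]

theorem mul_coeff_zero_mul_coeff_pow [CommRing R] (f : R⟦X⟧) (p m : ℕ) :
    m * coeff 0 f * coeff m (f ^ p) =
      ∑ l ∈ Icc 1 m, (l * p - m + l) * coeff l f * coeff (m - l) (f ^ p) := by
  have euler : f * (X * d⁄dX R (f ^ p)) = p • ((X * d⁄dX R f) * f ^ p) := by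
    rw [mul_left_comm, mul_derivative_pow, mul_smul_comm, mul_assoc]
  have coeffs := congrArg (coeff m) euler
  rw [map_nsmul, coeff_mul_eq_add_sum_Icc f, coeff_mul_eq_add_sum_Icc (X * d⁄dX R f)] at coeffs
  simp only [coeff_X_mul_derivative, Nat.cast_zero, zero_mul, zero_add, nsmul_eq_mul,
    mul_sum] at coeffs
  have split : ∀ l ∈ Icc 1 m, (l * p - m + l : R) * coeff l f * coeff (m - l) (f ^ p) =
      p * (l * coeff l f * coeff (m - l) (f ^ p)) -
        coeff l f * ((m - l : ℕ) * coeff (m - l) (f ^ p)) := by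
    intro l hl
    rw [Nat.cast_sub (mem_Icc.mp hl).2]
    ring
  rw [sum_congr rfl split, sum_sub_distrib]
  linear_combination coeffs

end PowerSeries

/-- The Cauchy / J.C.P. Miller recurrence for the coefficients `c_m` of the
`p`-th power of a formal power series `f = Σ a_l X^l`: `c_0 = a_0^p` and, for `m ≥ 1`,
`m a_0 c_m = Σ_{l=1}^m (l p - m + l) a_l c_{m-l}`. -/
theorem powerSeries_pow_coeff_recurrence (f : PowerSeries ℝ) (p : ℕ) :
    PowerSeries.coeff (R := ℝ) 0 (f ^ p) = (PowerSeries.coeff (R := ℝ) 0 f) ^ p ∧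
    ∀ m : ℕ, 1 ≤ m →
      (m : ℝ) * PowerSeries.coeff (R := ℝ) 0 f * PowerSeries.coeff (R := ℝ) m (f ^ p)
        = ∑ l ∈ Finset.Icc 1 m,
            ((l : ℝ) * (p : ℝ) - (m : ℝ) + (l : ℝ)) * PowerSeries.coeff (R := ℝ) l f
              * PowerSeries.coeff (R := ℝ) (m - l) (f ^ p) := by
  refine ⟨?_, fun m _ => PowerSeries.mul_coeff_zero_mul_coeff_pow f p m⟩
  simp only [PowerSeries.coeff_zero_eq_constantCoeff_apply, map_pow]
end
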